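/- arXiv:0912.0591 — 10 statements merged into one kernel-verified Lean document; each statement's English description precedes it below -/
import Mathlib

section
/- The frequency map Ω₀(p₁) := ∂_{p₁}h(p₁,P₂(p₁)) is C¹ on Ω and for every p₁ ∈ Ω its derivative equals the Schur complement H₁₁ − H₁₂H₂₂⁻¹H₂₁ of the Hessian of h at (p₁,P₂(p₁)); in particular dΩ₀(p₁) is a symmetric positive definite m×m matrix for every p₁ ∈ Ω (the frequency map has positive torsion). -/
/-!
Differentiating the criticality condition `∂_{p₂}h(p₁, P₂ p₁) = 0` along the graph of `P₂` gives
`H₂₁ + H₂₂ dP₂ = 0`, i.e. `dP₂ = -H₂₂⁻¹H₂₁`, and the chain rule then gives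
`dΩ₀ = H₁₁ + H₁₂ dP₂ = H₁₁ - H₁₂H₂₂⁻¹H₂₁` (the Hessian being symmetric by Schwarz).
The Schur complement is positive definite because its quadratic form at `x` is the quadratic form
of the Hessian at `(x, -H₂₂⁻¹H₂₁x)`.
-/

noncomputable section

/-- The canonical basis of ℝᵐ×ℝʳ indexed by `Fin m ⊕ Fin r`. -/
def pbasis (m r : ℕ) : Fin m ⊕ Fin r → (Fin m → ℝ) × (Fin r → ℝ)
  | .inl i => (Pi.single i 1, 0)
  | .inr j => (0, Pi.single j 1)

/-- The Hessian of `h : ℝᵐ×ℝʳ → ℝ` at `p`, as a matrix in the canonical basis. -/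
def hessMatrix (m r : ℕ) (h : (Fin m → ℝ) × (Fin r → ℝ) → ℝ)
    (p : (Fin m → ℝ) × (Fin r → ℝ)) : Matrix (Fin m ⊕ Fin r) (Fin m ⊕ Fin r) ℝ :=
  Matrix.of fun a b => fderiv ℝ (fderiv ℝ h) p (pbasis m r a) (pbasis m r b)

open Matrix Filter Topology

namespace Matrix

variable {l m n K : Type*}

theorem PosDef.toBlocks₂₂ [Ring K] [PartialOrder K] [StarRing K] {H : Matrix (m ⊕ n) (m ⊕ n) K}
    (hH : H.PosDef) : H.toBlocks₂₂.PosDef :=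
  hH.submatrix Sum.inr_injective

variable [Fintype n] [DecidableEq n]

def schurComplement₂₂ [CommRing K] (H : Matrix (m ⊕ n) (m ⊕ n) K) : Matrix m m K :=
  H.toBlocks₁₁ - H.toBlocks₁₂ * H.toBlocks₂₂⁻¹ * H.toBlocks₂₁

theorem mulVec_add_eq_schurComplement_mulVec [Fintype m] [CommRing K] {A : Matrix l m K}
    {B : Matrix l n K} {C : Matrix n m K} {D : Matrix n n K} (hD : IsUnit D.det)
    {v : m → K} {w : n → K}
    (h : C *ᵥ v + D *ᵥ w = 0) : A *ᵥ v + B *ᵥ w = (A - B * D⁻¹ * C) *ᵥ v := by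
  have hw : w = -((D⁻¹ * C) *ᵥ v) := by
    rw [← mulVec_mulVec, ← mulVec_neg, ← eq_neg_of_add_eq_zero_right h, mulVec_mulVec,
      nonsing_inv_mul _ hD, one_mulVec]
  rw [hw, sub_mulVec, Matrix.mul_assoc, mulVec_neg, mulVec_mulVec, sub_eq_add_neg]

theorem PosDef.schurComplement₂₂ [Fintype m] [Field K] [PartialOrder K] [StarRing K]
    {H : Matrix (m ⊕ n) (m ⊕ n) K} (hH : H.PosDef) : H.schurComplement₂₂.PosDef := by
  have hD := hH.toBlocks₂₂
  have := hD.isUnit.invertible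
  have hB : H.toBlocks₁₂ᴴ = H.toBlocks₂₁ := by
    have hH' := hH.1
    rw [← fromBlocks_toBlocks H, isHermitian_fromBlocks_iff] at hH'
    exact hH'.2.1
  rw [← fromBlocks_toBlocks H, ← hB] at hH
  rw [Matrix.schurComplement₂₂, ← hB]
  refine of_dotProduct_mulVec_pos ((IsHermitian.fromBlocks₂₂ _ _ hD.1).mp hH.1) fun x hx => ?_
  have hxy : x ⊕ᵥ -((H.toBlocks₂₂⁻¹ * H.toBlocks₁₂ᴴ) *ᵥ x) ≠ 0 := fun h0 =>
    hx (funext fun i => congrFun h0 (Sum.inl i))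
  have := hH.dotProduct_mulVec_pos hxy
  rwa [dotProduct_mulVec, schur_complement_eq₂₂ _ _ _ _ hD.1, add_neg_cancel, star_zero,
    zero_vecMul, zero_dotProduct, zero_add, ← dotProduct_mulVec] at this

end Matrix

theorem HasFDerivAt.apply_eq_zero_of_eventually_eq_zero {𝕜 E F G : Type*}
    [NontriviallyNormedField 𝕜] [NormedAddCommGroup E] [NormedSpace 𝕜 E] [NormedAddCommGroup F]
    [NormedSpace 𝕜 F] [NormedAddCommGroup G] [NormedSpace 𝕜 G] {g : E → F →L[𝕜] G}
    {g' : E →L[𝕜] F →L[𝕜] G} {x : E} {w : F} (hg : HasFDerivAt g g' x)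
    (hw : ∀ᶠ y in 𝓝 x, g y w = 0) (v : E) : g' v w = 0 := by
  have h₁ : HasFDerivAt (fun y => g y w) ((ContinuousLinearMap.apply 𝕜 G w).comp g') x :=
    (ContinuousLinearMap.apply 𝕜 G w).hasFDerivAt.comp x hg
  have h₀ : HasFDerivAt (fun y => g y w) (0 : E →L[𝕜] G) x :=
    (hasFDerivAt_const 0 x).congr_of_eventuallyEq hw
  exact DFunLike.congr_fun (h₁.unique h₀) v

section FrequencyMap

variable {m r : ℕ} {h : (Fin m → ℝ) × (Fin r → ℝ) → ℝ} {P₂ : (Fin m → ℝ) → (Fin r → ℝ)}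

theorem sum_elim_smul_pbasis (v : Fin m → ℝ) (w : Fin r → ℝ) :
    ∑ a, Sum.elim v w a • pbasis m r a = (v, w) := by
  rw [Fintype.sum_sum_type]
  ext i
  · simp [pbasis, Prod.fst_sum, Finset.sum_apply, Pi.single_apply]
  · simp [pbasis, Prod.snd_sum, Finset.sum_apply, Pi.single_apply]

theorem hessMatrix_mulVec_apply (p : (Fin m → ℝ) × (Fin r → ℝ)) (v : Fin m → ℝ)
    (w : Fin r → ℝ) (a : Fin m ⊕ Fin r) :
    (hessMatrix m r h p *ᵥ Sum.elim v w) a = fderiv ℝ (fderiv ℝ h) p (pbasis m r a) (v, w) := by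
  conv_rhs => rw [← sum_elim_smul_pbasis v w]
  simp [mulVec, dotProduct, hessMatrix, mul_comm]

variable (h P₂) in
def frequencyMap (p₁ : Fin m → ℝ) : Fin m → ℝ :=
  fun i => fderiv ℝ h (p₁, P₂ p₁) (Pi.single i 1, 0)

variable (m r) in
def firstComponents : (((Fin m → ℝ) × (Fin r → ℝ)) →L[ℝ] ℝ) →L[ℝ] (Fin m → ℝ) :=
  ContinuousLinearMap.pi fun i => ContinuousLinearMap.apply ℝ ℝ (pbasis m r (.inl i))

theorem contDiffOn_frequencyMap {Ω : Set (Fin m → ℝ)} (hh : ContDiff ℝ 2 h)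
    (hP₂ : ContDiffOn ℝ 1 P₂ Ω) : ContDiffOn ℝ 1 (frequencyMap h P₂) Ω :=
  (firstComponents m r).contDiff.comp_contDiffOn <|
    (hh.fderiv_right le_rfl).comp_contDiffOn (contDiffOn_id.prodMk hP₂)

theorem hasFDerivAt_frequencyMap {p₁ : Fin m → ℝ} (hh : ContDiff ℝ 2 h)
    (hP₂ : DifferentiableAt ℝ P₂ p₁)
    (hcrit : ∀ᶠ q in 𝓝 p₁, ∀ j, fderiv ℝ h (q, P₂ q) (0, Pi.single j 1) = 0)
    (hunit : IsUnit (hessMatrix m r h (p₁, P₂ p₁)).toBlocks₂₂.det) :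
    HasFDerivAt (frequencyMap h P₂)
      (hessMatrix m r h (p₁, P₂ p₁)).schurComplement₂₂.mulVecLin.toContinuousLinearMap p₁ := by
  set H := hessMatrix m r h (p₁, P₂ p₁)
  set D := fderiv ℝ P₂ p₁
  have hg : HasFDerivAt (fun q => fderiv ℝ h (q, P₂ q))
      ((fderiv ℝ (fderiv ℝ h) (p₁, P₂ p₁)).comp ((ContinuousLinearMap.id ℝ _).prod D)) p₁ :=
    ((hh.fderiv_right le_rfl).differentiable one_ne_zero _).hasFDerivAt.comp p₁
      ((hasFDerivAt_id p₁).prodMk hP₂.hasFDerivAt)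
  have hHess : ∀ v a, (H *ᵥ Sum.elim v (D v)) a =
      fderiv ℝ (fderiv ℝ h) (p₁, P₂ p₁) (v, D v) (pbasis m r a) := fun v a => by
    rw [hessMatrix_mulVec_apply, (hh.contDiffAt.isSymmSndFDerivAt (by simp)).eq]
  have hblocks : ∀ v, H *ᵥ Sum.elim v (D v) = Sum.elim
      (H.toBlocks₁₁ *ᵥ v + H.toBlocks₁₂ *ᵥ D v) (H.toBlocks₂₁ *ᵥ v + H.toBlocks₂₂ *ᵥ D v) :=
    fun v => by
      simpa only [fromBlocks_toBlocks, Sum.elim_comp_inl, Sum.elim_comp_inr] using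
        fromBlocks_mulVec H.toBlocks₁₁ H.toBlocks₁₂ H.toBlocks₂₁ H.toBlocks₂₂ (Sum.elim v (D v))
  have hgraph : ∀ v, H.toBlocks₂₁ *ᵥ v + H.toBlocks₂₂ *ᵥ D v = 0 := fun v => funext fun j =>
    calc _ = (H *ᵥ Sum.elim v (D v)) (.inr j) := congrFun (hblocks v).symm (.inr j)
      _ = 0 := (hHess v _).trans <|
        hg.apply_eq_zero_of_eventually_eq_zero (hcrit.mono fun q hq => hq j) v
  refine ((firstComponents m r).hasFDerivAt.comp p₁ hg).congr_fderiv ?_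
  ext v i
  calc _ = (H *ᵥ Sum.elim v (D v)) (.inl i) := (hHess v _).symm
    _ = (H.toBlocks₁₁ *ᵥ v + H.toBlocks₁₂ *ᵥ D v) i := congrFun (hblocks v) (.inl i)
    _ = _ := by rw [mulVec_add_eq_schurComplement_mulVec hunit (hgraph v)]; rfl

end FrequencyMap

/-- the frequency map `Ω₀(p₁) = ∂_{p₁}h(p₁,P₂(p₁))` is C¹ on `Ω`, its
derivative is the Schur complement `H₁₁ − H₁₂H₂₂⁻¹H₂₁` of the Hessian of `h` at
`(p₁,P₂(p₁))`, and this derivative is a symmetric positive definite matrix (positive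
torsion). -/
theorem frequency_map_positive_torsion
    (m r : ℕ) (h : (Fin m → ℝ) × (Fin r → ℝ) → ℝ) (hh : ContDiff ℝ 2 h)
    (hhess : ∀ p : (Fin m → ℝ) × (Fin r → ℝ), (hessMatrix m r h p).PosDef)
    (Ω : Set (Fin m → ℝ)) (hΩ : IsOpen Ω)
    (P₂ : (Fin m → ℝ) → (Fin r → ℝ)) (hP₂ : ContDiffOn ℝ 1 P₂ Ω)
    (hP₂crit : ∀ p₁ ∈ Ω, ∀ j : Fin r, fderiv ℝ h (p₁, P₂ p₁) (0, Pi.single j 1) = 0) :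
    let Ω₀ : (Fin m → ℝ) → (Fin m → ℝ) := fun p₁ =>
      fun i => fderiv ℝ h (p₁, P₂ p₁) (Pi.single i 1, 0)
    let Schur : (Fin m → ℝ) → Matrix (Fin m) (Fin m) ℝ := fun p₁ =>
      (hessMatrix m r h (p₁, P₂ p₁)).toBlocks₁₁ -
        (hessMatrix m r h (p₁, P₂ p₁)).toBlocks₁₂ *
          ((hessMatrix m r h (p₁, P₂ p₁)).toBlocks₂₂)⁻¹ *
            (hessMatrix m r h (p₁, P₂ p₁)).toBlocks₂₁
    ContDiffOn ℝ 1 Ω₀ Ω ∧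
    ∀ p₁ ∈ Ω,
      HasFDerivAt Ω₀ ((Schur p₁).mulVecLin.toContinuousLinearMap) p₁ ∧
      (Schur p₁).IsSymm ∧ (Schur p₁).PosDef := by
  intro Ω₀ Schur
  refine ⟨contDiffOn_frequencyMap hh hP₂, fun p₁ hp₁ => ?_⟩
  have hp₁Ω : Ω ∈ 𝓝 p₁ := hΩ.mem_nhds hp₁
  have hH := hhess (p₁, P₂ p₁)
  have hSchur : (Schur p₁).PosDef := hH.schurComplement₂₂
  refine ⟨hasFDerivAt_frequencyMap hh ((hP₂.contDiffAt hp₁Ω).differentiableAt one_ne_zero)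
      (eventually_of_mem hp₁Ω hP₂crit) (isUnit_iff_ne_zero.2 hH.toBlocks₂₂.det_pos.ne'),
    (conjTranspose_eq_transpose_of_trivial _).symm.trans hSchur.1, hSchur⟩
end
end

section
/- Let Σ = {p ∈ ℝⁿ : ∂_{p₂}h(p) = 0} and let Ω ⊆ ℝᵐ be the image of Σ under the projection p ↦ p₁. Then Ω is open, and Σ is the graph of a unique function P₂ : Ω → ℝʳ (i.e. for each p₁ ∈ Ω there is exactly one p₂ with ∂_{p₂}h(p₁,p₂) = 0, namely p₂ = P₂(p₁)); moreover P₂ is smooth. In particular Σ is a smooth m-dimensional submanifold of ℝⁿ. -/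
noncomputable section

lemma pbasis_sum (m r : ℕ) (w : (Fin m → ℝ) × (Fin r → ℝ)) :
    ∑ a : Fin m ⊕ Fin r, Sum.elim w.1 w.2 a • pbasis m r a = w := by
  rw [Fintype.sum_sum_type]
  simp only [Sum.elim_inl, Sum.elim_inr, pbasis, Prod.smul_mk, smul_zero]
  ext x
  · simp [Prod.fst_sum, Finset.sum_apply, Pi.single_apply]
  · simp [Prod.snd_sum, Finset.sum_apply, Pi.single_apply]

lemma clm_snd_decomp {m r : ℕ} (φ : ((Fin m → ℝ) × (Fin r → ℝ)) →L[ℝ] ℝ) (v : Fin r → ℝ) :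
    φ (0, v) = ∑ j, v j * φ (0, Pi.single j 1) := by
  have hv : ((0, v) : (Fin m → ℝ) × (Fin r → ℝ))
      = ∑ j, v j • (((0 : Fin m → ℝ), Pi.single j 1) : (Fin m → ℝ) × (Fin r → ℝ)) := by
    ext x
    · simp [Prod.fst_sum]
    · simp [Prod.snd_sum, Finset.sum_apply, Pi.single_apply]
  rw [hv, map_sum]
  simp only [map_smul, smul_eq_mul]

lemma hess_quad_pos {m r : ℕ} {h : (Fin m → ℝ) × (Fin r → ℝ) → ℝ}
    (hhess : ∀ p, (hessMatrix m r h p).PosDef)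
    (p w : (Fin m → ℝ) × (Fin r → ℝ)) (hw : w ≠ 0) :
    0 < fderiv ℝ (fderiv ℝ h) p w w := by
  set B := fderiv ℝ (fderiv ℝ h) p with hB
  set x : Fin m ⊕ Fin r → ℝ := Sum.elim w.1 w.2 with hxdef
  have hx : x ≠ 0 := by
    intro h0
    apply hw
    have h1 : w.1 = 0 := funext fun i => congrFun h0 (.inl i)
    have h2 : w.2 = 0 := funext fun j => congrFun h0 (.inr j)
    exact Prod.ext h1 h2
  have hpos := (hhess p).dotProduct_mulVec_pos hx
  have key : dotProduct (star x) ((hessMatrix m r h p).mulVec x) = B w w := by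
    rw [star_trivial]
    conv_rhs => rw [← pbasis_sum m r w]
    simp only [map_sum, map_smul, ContinuousLinearMap.sum_apply,
      ContinuousLinearMap.smul_apply, smul_eq_mul, dotProduct, Matrix.mulVec,
      hessMatrix, Matrix.of_apply, hxdef]
    have hsym : ∀ a b, (fderiv ℝ (fderiv ℝ h) p) (pbasis m r a) (pbasis m r b)
        = (fderiv ℝ (fderiv ℝ h) p) (pbasis m r b) (pbasis m r a) := by
      intro a b
      have h2 := congrFun (congrFun (hhess p).1 b) a
      simpa [hessMatrix, Matrix.conjTranspose_apply] using h2
    refine Finset.sum_congr rfl fun a _ => ?_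
    congr 1
    refine Finset.sum_congr rfl fun b _ => ?_
    rw [hsym a b]
    ring
  rwa [key] at hpos

lemma crit_unique {m r : ℕ} {h : (Fin m → ℝ) × (Fin r → ℝ) → ℝ} (hh : ContDiff ℝ (⊤ : ℕ∞) h)
    (hhess : ∀ p, (hessMatrix m r h p).PosDef)
    (p₁ : Fin m → ℝ) (a b : Fin r → ℝ)
    (ha : ∀ j, fderiv ℝ h (p₁, a) (0, Pi.single j 1) = 0)
    (hb : ∀ j, fderiv ℝ h (p₁, b) (0, Pi.single j 1) = 0) : a = b := by
  by_contra hab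
  set v := b - a with hv
  have hvne : v ≠ 0 := sub_ne_zero.2 (Ne.symm hab)
  set c : ℝ → (Fin m → ℝ) × (Fin r → ℝ) := fun t => (p₁, a + t • v) with hc
  set ψ : ℝ → ℝ := fun t => fderiv ℝ h (c t) (0, v) with hψ
  have hfd : ContDiff ℝ (⊤ : ℕ∞) (fderiv ℝ h) := hh.fderiv_right (by simp)
  have hders : ∀ t : ℝ, HasDerivAt ψ (fderiv ℝ (fderiv ℝ h) (c t) (0, v) (0, v)) t := by
    intro t
    have hct : HasDerivAt c (((0 : Fin m → ℝ), v) : (Fin m → ℝ) × (Fin r → ℝ)) t := by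
      have h1 : HasDerivAt (fun t : ℝ => a + t • v) v t := by
        simpa using ((hasDerivAt_id t).smul_const v).const_add a
      exact (hasDerivAt_const t p₁).prodMk h1
    have hB : HasFDerivAt (fderiv ℝ h) (fderiv ℝ (fderiv ℝ h) (c t)) (c t) :=
      (hfd.differentiable (by simp) (c t)).hasFDerivAt
    have hcomp : HasDerivAt (fun t => fderiv ℝ h (c t))
        (fderiv ℝ (fderiv ℝ h) (c t) ((0 : Fin m → ℝ), v)) t :=
      hB.comp_hasDerivAt t hct
    simpa using hcomp.clm_apply (hasDerivAt_const t (((0 : Fin m → ℝ), v)))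
  have hψ0 : ψ 0 = 0 := by
    have hc0 : c 0 = (p₁, a) := by simp [hc]
    rw [hψ]; simp only; rw [hc0, clm_snd_decomp]
    simp [ha]
  have hψ1 : ψ 1 = 0 := by
    have hc1 : c 1 = (p₁, b) := by simp [hc, hv]
    rw [hψ]; simp only; rw [hc1, clm_snd_decomp]
    simp [hb]
  have hcont : Continuous ψ := by
    rw [continuous_iff_continuousAt]
    exact fun t => (hders t).continuousAt
  obtain ⟨ξ, _, hξ⟩ := exists_hasDerivAt_eq_slope ψ
    (fun t => fderiv ℝ (fderiv ℝ h) (c t) (0, v) (0, v)) zero_lt_one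
    hcont.continuousOn (fun x _ => hders x)
  rw [hψ0, hψ1] at hξ
  simp only [sub_zero, zero_sub] at hξ
  have hpos := hess_quad_pos hhess (c ξ) ((0 : Fin m → ℝ), v)
    (fun h0 => hvne (congrArg Prod.snd h0))
  rw [hξ] at hpos
  norm_num at hpos

open ContinuousLinearMap in
/-- The map `G p = (p₁, ∂₂h(p))`. -/
def Gmap (m r : ℕ) (h : (Fin m → ℝ) × (Fin r → ℝ) → ℝ) :
    (Fin m → ℝ) × (Fin r → ℝ) → (Fin m → ℝ) × (Fin r → ℝ) :=
  fun p => (p.1, fun j => fderiv ℝ h p (0, Pi.single j 1))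

open ContinuousLinearMap in
def DG (m r : ℕ) (h : (Fin m → ℝ) × (Fin r → ℝ) → ℝ) (p : (Fin m → ℝ) × (Fin r → ℝ)) :
    ((Fin m → ℝ) × (Fin r → ℝ)) →L[ℝ] ((Fin m → ℝ) × (Fin r → ℝ)) :=
  (fst ℝ (Fin m → ℝ) (Fin r → ℝ)).prod
    (pi fun j => (apply ℝ ℝ (((0 : Fin m → ℝ), Pi.single j 1))).comp
      (fderiv ℝ (fderiv ℝ h) p))

lemma Gmap_contDiff {m r : ℕ} {h : (Fin m → ℝ) × (Fin r → ℝ) → ℝ} (hh : ContDiff ℝ (⊤ : ℕ∞) h) :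
    ContDiff ℝ (⊤ : ℕ∞) (Gmap m r h) := by
  refine contDiff_fst.prodMk (contDiff_pi.2 fun j => ?_)
  exact (ContinuousLinearMap.apply ℝ ℝ (((0 : Fin m → ℝ), Pi.single j 1))).contDiff.comp
    (hh.fderiv_right (m := (⊤ : ℕ∞)) (by simp))

lemma Gmap_hasFDerivAt {m r : ℕ} {h : (Fin m → ℝ) × (Fin r → ℝ) → ℝ} (hh : ContDiff ℝ (⊤ : ℕ∞) h)
    (p : (Fin m → ℝ) × (Fin r → ℝ)) : HasFDerivAt (Gmap m r h) (DG m r h p) p := by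
  refine (hasFDerivAt_fst).prodMk (hasFDerivAt_pi.2 fun j => ?_)
  exact (ContinuousLinearMap.apply ℝ ℝ (((0 : Fin m → ℝ), Pi.single j 1))).hasFDerivAt.comp p
    (((hh.fderiv_right (m := (⊤ : ℕ∞)) (by simp)).differentiable (by simp) p).hasFDerivAt)

lemma DG_injective {m r : ℕ} {h : (Fin m → ℝ) × (Fin r → ℝ) → ℝ}
    (hhess : ∀ p, (hessMatrix m r h p).PosDef) (p : (Fin m → ℝ) × (Fin r → ℝ)) :
    Function.Injective (DG m r h p) := by
  have key : ∀ w, DG m r h p w = 0 → w = 0 := by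
    intro w hw
    have h1 : w.1 = 0 := congrArg Prod.fst hw
    have h2 : ∀ j, fderiv ℝ (fderiv ℝ h) p w ((0 : Fin m → ℝ), Pi.single j 1) = 0 :=
      fun j => congrFun (congrArg Prod.snd hw) j
    by_contra hwne
    have hq := hess_quad_pos hhess p w hwne
    have hw2 : w = ((0 : Fin m → ℝ), w.2) := by rw [← h1]
    have : fderiv ℝ (fderiv ℝ h) p w w = 0 := by
      conv_lhs => rw [hw2]
      rw [clm_snd_decomp (fderiv ℝ (fderiv ℝ h) p ((0 : Fin m → ℝ), w.2)) w.2]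
      rw [← hw2]
      simp [h2]
    rw [this] at hq
    exact lt_irrefl 0 hq
  intro x y hxy
  have := key (x - y) (by rw [map_sub, hxy, sub_self])
  exact sub_eq_zero.1 this

/-- for smooth `h` with everywhere positive definite Hessian, the set
`Σ = {p : ∂_{p₂}h(p) = 0}` projects onto an open set `Ω ⊆ ℝᵐ` and is the graph of a
unique function `P₂ : Ω → ℝʳ`, which is smooth.  (In particular `Σ` is a smooth
`m`-dimensional submanifold of ℝⁿ.) -/
theorem critical_section_is_smooth_graph
    (m r : ℕ) (h : (Fin m → ℝ) × (Fin r → ℝ) → ℝ) (hh : ContDiff ℝ (⊤ : ℕ∞) h)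
    (hhess : ∀ p : (Fin m → ℝ) × (Fin r → ℝ), (hessMatrix m r h p).PosDef) :
    let Sig : Set ((Fin m → ℝ) × (Fin r → ℝ)) :=
      {p | ∀ j : Fin r, fderiv ℝ h p (0, Pi.single j 1) = 0}
    let Ω : Set (Fin m → ℝ) := Prod.fst '' Sig
    IsOpen Ω ∧
    ∃ P₂ : (Fin m → ℝ) → (Fin r → ℝ),
      ContDiffOn ℝ (⊤ : ℕ∞) P₂ Ω ∧
      (∀ p₁ ∈ Ω, ∀ p₂ : Fin r → ℝ, ((p₁, p₂) ∈ Sig ↔ p₂ = P₂ p₁)) ∧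
      Sig = {z | z.1 ∈ Ω ∧ z.2 = P₂ z.1} := by
  intro Sig Ω
  classical
  -- uniqueness of the critical fiber
  have huniq : ∀ (p₁ : Fin m → ℝ) (a b : Fin r → ℝ),
      (p₁, a) ∈ Sig → (p₁, b) ∈ Sig → a = b := fun p₁ a b ha hb =>
    crit_unique hh hhess p₁ a b ha hb
  set P₂ : (Fin m → ℝ) → (Fin r → ℝ) :=
    fun p₁ => if hx : ∃ p₂, (p₁, p₂) ∈ Sig then hx.choose else 0 with hP₂def
  have hP₂mem : ∀ p₁ : Fin m → ℝ, (∃ p₂, (p₁, p₂) ∈ Sig) → (p₁, P₂ p₁) ∈ Sig := by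
    intro p₁ hx
    simp only [hP₂def, dif_pos hx]
    exact hx.choose_spec
  have hΩex : ∀ p₁ ∈ Ω, ∃ p₂, (p₁, p₂) ∈ Sig := by
    rintro p₁ ⟨p, hp, rfl⟩
    exact ⟨p.2, by rwa [Prod.mk.eta]⟩
  -- the fundamental local statement
  have hloc : ∀ p₀ ∈ Sig, (∀ᶠ q₁ in nhds p₀.1, q₁ ∈ Ω) ∧ ContDiffAt ℝ (⊤ : ℕ∞) P₂ p₀.1 := by
    intro p₀ hp₀
    -- invertible derivative
    have hinj := DG_injective hhess p₀
    have hbij : Function.Bijective ((DG m r h p₀).toLinearMap) :=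
      ⟨hinj, LinearMap.injective_iff_surjective.1 hinj⟩
    set eqv : ((Fin m → ℝ) × (Fin r → ℝ)) ≃L[ℝ] ((Fin m → ℝ) × (Fin r → ℝ)) :=
      (LinearEquiv.ofBijective ((DG m r h p₀).toLinearMap) hbij).toContinuousLinearEquiv
      with heqv
    have hcoe : (eqv : ((Fin m → ℝ) × (Fin r → ℝ)) →L[ℝ] ((Fin m → ℝ) × (Fin r → ℝ)))
        = DG m r h p₀ := by ext x <;> rfl
    have hfd : HasFDerivAt (Gmap m r h)
        (eqv : ((Fin m → ℝ) × (Fin r → ℝ)) →L[ℝ] ((Fin m → ℝ) × (Fin r → ℝ))) p₀ := by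
      rw [hcoe]; exact Gmap_hasFDerivAt hh p₀
    have hcd : ContDiffAt ℝ (⊤ : ℕ∞) (Gmap m r h) p₀ := (Gmap_contDiff hh).contDiffAt
    have hstrict : HasStrictFDerivAt (Gmap m r h)
        (eqv : ((Fin m → ℝ) × (Fin r → ℝ)) →L[ℝ] ((Fin m → ℝ) × (Fin r → ℝ))) p₀ :=
      hcd.hasStrictFDerivAt' hfd (by simp)
    set finv := hcd.localInverse hfd (by simp) with hfinv
    have hfinveq : finv = hstrict.localInverse (Gmap m r h) _ p₀ := rfl
    have hGp₀ : Gmap m r h p₀ = (p₀.1, (0 : Fin r → ℝ)) := by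
      refine Prod.ext rfl (funext fun j => hp₀ j)
    have hF : Continuous (fun q₁ : Fin m → ℝ => ((q₁, (0 : Fin r → ℝ)))) :=
      continuous_id.prodMk continuous_const
    have hright : ∀ᶠ y in nhds (Gmap m r h p₀), Gmap m r h (finv y) = y := by
      rw [hfinveq]; exact hstrict.eventually_right_inverse
    have hev : ∀ᶠ q₁ in nhds p₀.1,
        Gmap m r h (finv (q₁, (0 : Fin r → ℝ))) = (q₁, (0 : Fin r → ℝ)) := by
      have : Filter.Tendsto (fun q₁ : Fin m → ℝ => ((q₁, (0 : Fin r → ℝ))))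
          (nhds p₀.1) (nhds (Gmap m r h p₀)) := by
        rw [hGp₀]; exact hF.continuousAt
      exact this.eventually hright
    have hsig : ∀ q₁ : Fin m → ℝ,
        Gmap m r h (finv (q₁, (0 : Fin r → ℝ))) = (q₁, (0 : Fin r → ℝ)) →
        finv (q₁, (0 : Fin r → ℝ)) ∈ Sig ∧ (finv (q₁, (0 : Fin r → ℝ))).1 = q₁ := by
      intro q₁ hq
      constructor
      · intro j
        exact congrFun (congrArg Prod.snd hq) j
      · exact congrArg Prod.fst hq
    constructor
    · filter_upwards [hev] with q₁ hq
      exact ⟨finv (q₁, (0 : Fin r → ℝ)), (hsig q₁ hq).1, (hsig q₁ hq).2⟩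
    · have hsm : ContDiffAt ℝ (⊤ : ℕ∞) (fun q₁ : Fin m → ℝ =>
          (finv (q₁, (0 : Fin r → ℝ))).2) p₀.1 := by
      -- finv smooth at Gmap p₀ = (p₀.1, 0)
        have h1 : ContDiffAt ℝ (⊤ : ℕ∞) finv (Gmap m r h p₀) := hcd.to_localInverse hfd (by simp)
        have h2 : ContDiffAt ℝ (⊤ : ℕ∞) (fun q₁ : Fin m → ℝ => ((q₁, (0 : Fin r → ℝ)))) p₀.1 :=
          (contDiff_id.prodMk contDiff_const).contDiffAt
        have h3 : ContDiffAt ℝ (⊤ : ℕ∞) (fun q₁ : Fin m → ℝ =>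
            finv (q₁, (0 : Fin r → ℝ))) p₀.1 := by
          refine ContDiffAt.comp p₀.1 ?_ h2
          rwa [hGp₀] at h1
        exact contDiffAt_snd.comp p₀.1 h3
      refine hsm.congr_of_eventuallyEq ?_
      filter_upwards [hev] with q₁ hq
      obtain ⟨hmem, hfst⟩ := hsig q₁ hq
      have hmem' : (q₁, (finv (q₁, (0 : Fin r → ℝ))).2) ∈ Sig := by
        have heq : finv (q₁, (0 : Fin r → ℝ)) = (q₁, (finv (q₁, (0 : Fin r → ℝ))).2) :=
          Prod.ext hfst rfl
        exact heq ▸ hmem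
      have hq₁Ω : ∃ p₂, (q₁, p₂) ∈ Sig := ⟨_, hmem'⟩
      exact huniq q₁ (P₂ q₁) _ (hP₂mem q₁ hq₁Ω) hmem'
  constructor
  · rw [isOpen_iff_mem_nhds]
    rintro p₁ ⟨p, hp, rfl⟩
    exact (hloc p hp).1
  refine ⟨P₂, ?_, ?_, ?_⟩
  · intro p₁ hp₁
    obtain ⟨p, hp, rfl⟩ := hp₁
    exact ((hloc p hp).2).contDiffWithinAt
  · intro p₁ hp₁ p₂
    constructor
    · intro hmem
      exact huniq p₁ p₂ (P₂ p₁) hmem (hP₂mem p₁ (hΩex p₁ hp₁))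
    · rintro rfl
      exact hP₂mem p₁ (hΩex p₁ hp₁)
  · ext z
    constructor
    · intro hz
      have hzΩ : z.1 ∈ Ω := ⟨z, hz, rfl⟩
      refine ⟨hzΩ, ?_⟩
      have hz' : (z.1, z.2) ∈ Sig := by rwa [Prod.mk.eta]
      exact huniq z.1 z.2 (P₂ z.1) hz' (hP₂mem z.1 (hΩex z.1 hzΩ))
    · rintro ⟨hzΩ, hz2⟩
      have := hP₂mem z.1 (hΩex z.1 hzΩ)
      rw [← hz2, Prod.mk.eta] at this
      exact this
end
end

section
/- Define R̃(t,q,p) := G(t,q,p) − G(t,q,p₀) − ⟨∂h(p) − ∂h(p₀), ∂_q f(t,q)⟩; then R̃ is smooth with R̃(t,q,p₀) = 0 for all (t,q), and for every compact set K ⊆ ℝⁿ there is a constant C > 0 such that for all ε ∈ (0,1], all (t,q) ∈ 𝕋×𝕋ⁿ, all e ∈ ℝ and all p ∈ K: |H̃(ψ^ε(t,e,q,p)) − (h(p) + e − ε²V(q₂) − ε²R̃(t,q,p))| ≤ Cε⁴. In other words, after the symplectic change of variables ψ^ε one has H̃∘ψ^ε = h(p) + e − ε²V(q₂) − ε²R̃(t,q,p)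 + O(ε⁴) uniformly on compact sets in p, with R̃ vanishing at p = p₀. -/
open Matrix MeasureTheory

noncomputable section

lemma shiftZ {E : Type*} (F : ℝ → E) (hF : ∀ x, F (x + 1) = F x) :
    ∀ (k : ℤ) (y : ℝ), F (y + k) = F y := by
  intro k
  induction k using Int.induction_on with
  | zero => intro y; simp
  | succ n ih =>
      intro y
      push_cast
      rw [show y + ((n : ℝ) + 1) = (y + (n : ℝ)) + 1 by ring, hF]
      exact_mod_cast ih y
  | pred n ih =>
      intro y
      push_cast
      rw [show y + (-(n : ℝ) - 1) = (y - 1) + (-(n : ℝ)) by ring]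
      have h3 : F ((y - 1) + (-(n : ℝ))) = F (y - 1) := by exact_mod_cast ih (y - 1)
      rw [h3]
      have h4 := hF (y - 1)
      rw [sub_add_cancel] at h4
      exact h4.symm

lemma shiftR {E : Type*} (F : ℝ → E) (hF : ∀ x, F (x + 1) = F x) (x : ℝ) :
    F (Int.fract x) = F x := by
  have := shiftZ F hF ⌊x⌋ (Int.fract x)
  rw [Int.fract_add_floor] at this
  exact this.symm

lemma shiftPi {k : ℕ} {E : Type*} (F : (Fin k → ℝ) → E)
    (hF : ∀ x i, F (x + Pi.single i 1) = F x) (x : Fin k → ℝ) :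
    F (fun i => Int.fract (x i)) = F x := by
  have hsingle : ∀ (y : Fin k → ℝ) (i : Fin k) (n : ℤ), F (y + Pi.single i (n : ℝ)) = F y := by
    intro y i n
    have h1 : ∀ s : ℝ, F (y + Pi.single i (s + 1)) = F (y + Pi.single i s) := by
      intro s
      have he : y + Pi.single i (s + 1) = (y + Pi.single i s) + Pi.single i 1 := by
        rw [add_assoc, ← Pi.single_add]
      rw [he, hF]
    have := shiftZ (fun s => F (y + Pi.single i s)) h1 n 0
    simpa using this
  have hvec : ∀ (s : Finset (Fin k)) (y : Fin k → ℝ) (c : Fin k → ℤ),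
      F (y + ∑ i ∈ s, Pi.single i ((c i : ℝ))) = F y := by
    intro s
    induction s using Finset.induction_on with
    | empty => intro y c; simp
    | @insert a s' hni ih =>
        intro y c
        rw [Finset.sum_insert hni, ← add_assoc, ih, hsingle]
  have hx : x = (fun i => Int.fract (x i)) + ∑ i, Pi.single i ((⌊x i⌋ : ℝ)) := by
    ext j
    simp only [Pi.add_apply, Finset.sum_apply]
    rw [Finset.sum_eq_single j]
    · rw [Pi.single_eq_same, Int.fract]; ring
    · intro b _ hbj; exact Pi.single_eq_of_ne (Ne.symm hbj) _
    · intro hj; exact absurd (Finset.mem_univ j) hj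
  conv_rhs => rw [hx]
  exact (hvec Finset.univ _ _).symm

lemma per_master {m r : ℕ} {α : Type*} (F : ℝ × ((Fin m → ℝ) × (Fin r → ℝ)) → α)
    (h1 : ∀ z, F (z.1 + 1, z.2) = F z)
    (h2 : ∀ z i, F (z.1, (z.2.1 + Pi.single i 1, z.2.2)) = F z)
    (h3 : ∀ z j, F (z.1, (z.2.1, z.2.2 + Pi.single j 1)) = F z)
    (z : ℝ × ((Fin m → ℝ) × (Fin r → ℝ))) :
    F (Int.fract z.1, (fun i => Int.fract (z.2.1 i), fun j => Int.fract (z.2.2 j))) = F z := by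
  obtain ⟨t, q1, q2⟩ := z
  calc F (Int.fract t, (fun i => Int.fract (q1 i), fun j => Int.fract (q2 j)))
      = F (t, (fun i => Int.fract (q1 i), fun j => Int.fract (q2 j))) :=
        shiftR (fun s => F (s, (fun i => Int.fract (q1 i), fun j => Int.fract (q2 j))))
          (fun s => h1 (s, (fun i => Int.fract (q1 i), fun j => Int.fract (q2 j)))) t
    _ = F (t, (q1, fun j => Int.fract (q2 j))) :=
        shiftPi (fun y => F (t, (y, fun j => Int.fract (q2 j))))
          (fun y i => h2 (t, (y, fun j => Int.fract (q2 j))) i) q1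
    _ = F (t, (q1, q2)) :=
        shiftPi (fun y => F (t, (q1, y))) (fun y j => h3 (t, (q1, y)) j) q2

lemma fderiv_shift {E F : Type*} [NormedAddCommGroup E] [NormedSpace ℝ E]
    [NormedAddCommGroup F] [NormedSpace ℝ F] (f : E → F) (hf : Differentiable ℝ f) (c : E)
    (hper : ∀ x, f (x + c) = f x) (x : E) : fderiv ℝ f (x + c) = fderiv ℝ f x := by
  have h1 : HasFDerivAt (fun y => f (y + c)) (fderiv ℝ f (x + c)) x := by
    have := (hf (x + c)).hasFDerivAt.comp x ((hasFDerivAt_id x).add_const c)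
    simpa [Function.comp_def] using this
  have h2 : (fun y => f (y + c)) = f := funext hper
  rw [h2] at h1
  exact h1.fderiv.symm

lemma clm_pair_apply {m r : ℕ} (L : ((Fin m → ℝ) × (Fin r → ℝ)) →L[ℝ] ℝ)
    (v : (Fin m → ℝ) × (Fin r → ℝ)) :
    L v = (fun i => L (Pi.single i 1, 0)) ⬝ᵥ v.1 + (fun j => L (0, Pi.single j 1)) ⬝ᵥ v.2 := by
  have h1 : ∀ {k : ℕ} (c : ℝ) (i : Fin k), c • (Pi.single i 1 : Fin k → ℝ) = Pi.single i c := by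
    intro k c i; ext j
    rcases eq_or_ne j i with hji | hji <;> simp [Pi.single_apply, hji]
  have hv : v = (∑ i, (v.1 i) • ((Pi.single i 1 : Fin m → ℝ), (0 : Fin r → ℝ)))
      + (∑ j, (v.2 j) • ((0 : Fin m → ℝ), (Pi.single j 1 : Fin r → ℝ))) := by
    refine Prod.ext ?_ ?_ <;>
      simp [Prod.fst_sum, Prod.snd_sum, Prod.smul_mk, smul_zero, h1, Finset.univ_sum_single]
  conv_lhs => rw [hv]
  rw [map_add, map_sum, map_sum]
  simp only [dotProduct]
  congr 1 <;> exact Finset.sum_congr rfl fun i _ => by rw [L.map_smul, smul_eq_mul, mul_comm]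

-- abbreviations for the splitting ℝⁿ = ℝᵐ×ℝʳ of the q and p variables
variable (m r : ℕ)

/-- gradient in `p` of `h : ℝᵐ×ℝʳ → ℝ`. -/
def gradh (h : (Fin m → ℝ) × (Fin r → ℝ) → ℝ) (p : (Fin m → ℝ) × (Fin r → ℝ)) :
    (Fin m → ℝ) × (Fin r → ℝ) :=
  ((fun i => fderiv ℝ h p (Pi.single i 1, 0)), (fun j => fderiv ℝ h p (0, Pi.single j 1)))

/-- gradient in `q` of `f : ℝ × (ℝᵐ×ℝʳ) → ℝ`. -/
def gradqf (f : ℝ × ((Fin m → ℝ) × (Fin r → ℝ)) → ℝ) (z : ℝ × ((Fin m → ℝ) × (Fin r → ℝ))) :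
    (Fin m → ℝ) × (Fin r → ℝ) :=
  ((fun i => fderiv ℝ f z (0, (Pi.single i 1, 0))),
   (fun j => fderiv ℝ f z (0, (0, Pi.single j 1))))

/-- Euclidean pairing on ℝᵐ×ℝʳ. -/
def pairdot (u v : (Fin m → ℝ) × (Fin r → ℝ)) : ℝ := u.1 ⬝ᵥ v.1 + u.2 ⬝ᵥ v.2

/-- after the symplectic change of variables
`ψ^ε(t,e,q,p) = (t, e+ε²∂ₜf, q, p+ε²∂_qf)`, where `f` solves the homological equation,
one has `H̃∘ψ^ε = h(p) + e − ε²V(q₂) − ε²R̃(t,q,p) + O(ε⁴)` uniformly on compact sets in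
`p` (and uniformly in `(t,q)` by periodicity), where
`R̃(t,q,p) = G(t,q,p) − G(t,q,p₀) − ⟨∂h(p)−∂h(p₀), ∂_q f(t,q)⟩` is smooth and vanishes at
`p = p₀`. -/
theorem averaging_normal_form
    (h : (Fin m → ℝ) × (Fin r → ℝ) → ℝ) (hh : ContDiff ℝ (⊤ : ℕ∞) h)
    (G : ℝ × ((Fin m → ℝ) × (Fin r → ℝ)) × ((Fin m → ℝ) × (Fin r → ℝ)) → ℝ)
    (hG : ContDiff ℝ (⊤ : ℕ∞) G)
    (hGt : ∀ z, G (z.1 + 1, z.2) = G z)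
    (hGq1 : ∀ z (i : Fin m), G (z.1, (z.2.1.1 + Pi.single i 1, z.2.1.2), z.2.2) = G z)
    (hGq2 : ∀ z (j : Fin r), G (z.1, (z.2.1.1, z.2.1.2 + Pi.single j 1), z.2.2) = G z)
    (ω : Fin m → ℝ) (p₀ : (Fin m → ℝ) × (Fin r → ℝ))
    (hgrad : ∀ v : (Fin m → ℝ) × (Fin r → ℝ), fderiv ℝ h p₀ v = ω ⬝ᵥ v.1)
    (V : (Fin r → ℝ) → ℝ)
    (hV : ∀ q₂ : Fin r → ℝ,
      V q₂ = ∫ t in (0:ℝ)..1, ∫ q₁ in Set.Icc (0 : Fin m → ℝ) 1, G (t, (q₁, q₂), p₀))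
    (f : ℝ × ((Fin m → ℝ) × (Fin r → ℝ)) → ℝ) (hf : ContDiff ℝ (⊤ : ℕ∞) f)
    (hft : ∀ z, f (z.1 + 1, z.2) = f z)
    (hfq1 : ∀ z (i : Fin m), f (z.1, (z.2.1 + Pi.single i 1, z.2.2)) = f z)
    (hfq2 : ∀ z (j : Fin r), f (z.1, (z.2.1, z.2.2 + Pi.single j 1)) = f z)
    (hhom : ∀ z : ℝ × ((Fin m → ℝ) × (Fin r → ℝ)),
      fderiv ℝ f z (1, (ω, 0)) = G (z.1, z.2, p₀) - V z.2.2) :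
    let Rt : ℝ × ((Fin m → ℝ) × (Fin r → ℝ)) × ((Fin m → ℝ) × (Fin r → ℝ)) → ℝ := fun z =>
      G z - G (z.1, z.2.1, p₀) -
        pairdot m r (gradh m r h z.2.2 - gradh m r h p₀) (gradqf m r f (z.1, z.2.1))
    let Htil : ℝ → ℝ × ℝ × ((Fin m → ℝ) × (Fin r → ℝ)) × ((Fin m → ℝ) × (Fin r → ℝ)) → ℝ :=
      fun ε z => h z.2.2.2 + z.2.1 - ε ^ 2 * G (z.1, z.2.2.1, z.2.2.2)
    let ψ : ℝ → ℝ × ℝ × ((Fin m → ℝ) × (Fin r → ℝ)) × ((Fin m → ℝ) × (Fin r → ℝ)) →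
        ℝ × ℝ × ((Fin m → ℝ) × (Fin r → ℝ)) × ((Fin m → ℝ) × (Fin r → ℝ)) := fun ε z =>
      (z.1, z.2.1 + ε ^ 2 * fderiv ℝ f (z.1, z.2.2.1) (1, 0), z.2.2.1,
        z.2.2.2 + ε ^ 2 • gradqf m r f (z.1, z.2.2.1))
    ContDiff ℝ (⊤ : ℕ∞) Rt ∧
    (∀ (t : ℝ) (q : (Fin m → ℝ) × (Fin r → ℝ)), Rt (t, q, p₀) = 0) ∧
    ∀ K : Set ((Fin m → ℝ) × (Fin r → ℝ)), IsCompact K →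
      ∃ C > 0, ∀ ε ∈ Set.Ioc (0:ℝ) 1, ∀ (t e : ℝ) (q : (Fin m → ℝ) × (Fin r → ℝ)),
        ∀ p ∈ K,
          |Htil ε (ψ ε (t, e, q, p)) -
            (h p + e - ε ^ 2 * V q.2 - ε ^ 2 * Rt (t, q, p))| ≤ C * ε ^ 4 := by
  intro Rt Htil ψ
  have hfdiff : Differentiable ℝ f := hf.differentiable (by simp)
  have hhdiff : Differentiable ℝ h := hh.differentiable (by simp)
  have hfd : ContDiff ℝ (⊤ : ℕ∞) (fderiv ℝ f) := hf.fderiv_right (by simp)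
  have hhd : ContDiff ℝ (⊤ : ℕ∞) (fderiv ℝ h) := hh.fderiv_right (by simp)
  -- Part 1: smoothness
  have P1 : ContDiff ℝ (⊤ : ℕ∞) (fun z : ℝ × ((Fin m → ℝ) × (Fin r → ℝ)) × ((Fin m → ℝ) × (Fin r → ℝ)) =>
      G z - G (z.1, z.2.1, p₀) -
        pairdot m r (gradh m r h z.2.2 - gradh m r h p₀) (gradqf m r f (z.1, z.2.1))) := by
    have hpair : ∀ z : ℝ × ((Fin m → ℝ) × (Fin r → ℝ)) × ((Fin m → ℝ) × (Fin r → ℝ)),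
        pairdot m r (gradh m r h z.2.2 - gradh m r h p₀) (gradqf m r f (z.1, z.2.1)) =
        (∑ i, (fderiv ℝ h z.2.2 (Pi.single i 1, 0) - fderiv ℝ h p₀ (Pi.single i 1, 0)) *
            fderiv ℝ f (z.1, z.2.1) (0, (Pi.single i 1, 0))) +
        (∑ j, (fderiv ℝ h z.2.2 (0, Pi.single j 1) - fderiv ℝ h p₀ (0, Pi.single j 1)) *
            fderiv ℝ f (z.1, z.2.1) (0, (0, Pi.single j 1))) := by
      intro z
      simp [pairdot, gradh, gradqf, dotProduct, sub_mul]
    simp only [hpair]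
    have c1 : ContDiff ℝ (⊤ : ℕ∞) (fun z : ℝ × ((Fin m → ℝ) × (Fin r → ℝ)) × ((Fin m → ℝ) × (Fin r → ℝ)) =>
        (z.1, z.2.1)) := contDiff_fst.prodMk (contDiff_fst.comp contDiff_snd)
    have c2 : ContDiff ℝ (⊤ : ℕ∞) (fun z : ℝ × ((Fin m → ℝ) × (Fin r → ℝ)) × ((Fin m → ℝ) × (Fin r → ℝ)) =>
        z.2.2) := contDiff_snd.comp contDiff_snd
    have c3 : ContDiff ℝ (⊤ : ℕ∞) (fun z : ℝ × ((Fin m → ℝ) × (Fin r → ℝ)) × ((Fin m → ℝ) × (Fin r → ℝ)) =>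
        (z.1, z.2.1, p₀)) :=
      contDiff_fst.prodMk ((contDiff_fst.comp contDiff_snd).prodMk contDiff_const)
    refine ContDiff.sub (hG.sub (hG.comp c3)) (ContDiff.add ?_ ?_) <;>
      refine ContDiff.sum fun i _ => ContDiff.mul (ContDiff.sub ?_ contDiff_const) ?_
    · exact ((hhd.comp c2).clm_apply contDiff_const)
    · exact ((hfd.comp c1).clm_apply contDiff_const)
    · exact ((hhd.comp c2).clm_apply contDiff_const)
    · exact ((hfd.comp c1).clm_apply contDiff_const)
  -- Part 2: vanishing at p₀
  have P2 : ∀ (t : ℝ) (q : (Fin m → ℝ) × (Fin r → ℝ)),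
      G (t, q, p₀) - G (t, q, p₀) -
        pairdot m r (gradh m r h p₀ - gradh m r h p₀) (gradqf m r f (t, q)) = 0 := by
    intro t q
    simp [pairdot]
  -- Part 3
  have P3 : ∀ K : Set ((Fin m → ℝ) × (Fin r → ℝ)), IsCompact K →
      ∃ C > 0, ∀ ε ∈ Set.Ioc (0:ℝ) 1, ∀ (t e : ℝ) (q : (Fin m → ℝ) × (Fin r → ℝ)), ∀ p ∈ K,
        |(h (p + ε ^ 2 • gradqf m r f (t, q)) + (e + ε ^ 2 * fderiv ℝ f (t, q) (1, 0)) -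
            ε ^ 2 * G (t, q, p + ε ^ 2 • gradqf m r f (t, q))) -
          (h p + e - ε ^ 2 * V q.2 - ε ^ 2 * (G (t, q, p) - G (t, q, p₀) -
            pairdot m r (gradh m r h p - gradh m r h p₀) (gradqf m r f (t, q))))| ≤ C * ε ^ 4 := by
    intro K hK
    -- continuity/smoothness of the q-gradient of f
    have hgcd : ContDiff ℝ (⊤ : ℕ∞) (gradqf m r f) := by
      refine ContDiff.prodMk ?_ ?_ <;> exact contDiff_pi.2 fun i => hfd.clm_apply contDiff_const
    -- periodicity of the q-gradient of f
    have hfper : ∀ c : ℝ × ((Fin m → ℝ) × (Fin r → ℝ)), (∀ x, f (x + c) = f x) →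
        ∀ z, gradqf m r f (z + c) = gradqf m r f z := by
      intro c hc z
      simp only [gradqf, fderiv_shift f hfdiff c hc z]
    have hg1 : ∀ z : ℝ × ((Fin m → ℝ) × (Fin r → ℝ)),
        gradqf m r f (z.1 + 1, z.2) = gradqf m r f z := by
      intro z
      have he : (z.1 + 1, z.2) = z + ((1 : ℝ), ((0 : Fin m → ℝ), (0 : Fin r → ℝ))) := by
        cases z; simp [Prod.ext_iff]
      rw [he]
      refine hfper _ (fun x => ?_) z
      have hx : x + ((1 : ℝ), ((0 : Fin m → ℝ), (0 : Fin r → ℝ))) = (x.1 + 1, x.2) := by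
        cases x; simp [Prod.ext_iff]
      rw [hx]; exact hft x
    have hg2 : ∀ (z : ℝ × ((Fin m → ℝ) × (Fin r → ℝ))) (i : Fin m),
        gradqf m r f (z.1, (z.2.1 + Pi.single i 1, z.2.2)) = gradqf m r f z := by
      intro z i
      have he : (z.1, (z.2.1 + Pi.single i 1, z.2.2)) =
          z + ((0 : ℝ), ((Pi.single i 1 : Fin m → ℝ), (0 : Fin r → ℝ))) := by
        cases z; simp [Prod.ext_iff]
      rw [he]
      refine hfper _ (fun x => ?_) z
      have hx : x + ((0 : ℝ), ((Pi.single i 1 : Fin m → ℝ), (0 : Fin r → ℝ))) =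
          (x.1, (x.2.1 + Pi.single i 1, x.2.2)) := by
        cases x; simp [Prod.ext_iff]
      rw [hx]; exact hfq1 x i
    have hg3 : ∀ (z : ℝ × ((Fin m → ℝ) × (Fin r → ℝ))) (j : Fin r),
        gradqf m r f (z.1, (z.2.1, z.2.2 + Pi.single j 1)) = gradqf m r f z := by
      intro z j
      have he : (z.1, (z.2.1, z.2.2 + Pi.single j 1)) =
          z + ((0 : ℝ), ((0 : Fin m → ℝ), (Pi.single j 1 : Fin r → ℝ))) := by
        cases z; simp [Prod.ext_iff]
      rw [he]
      refine hfper _ (fun x => ?_) z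
      have hx : x + ((0 : ℝ), ((0 : Fin m → ℝ), (Pi.single j 1 : Fin r → ℝ))) =
          (x.1, (x.2.1, x.2.2 + Pi.single j 1)) := by
        cases x; simp [Prod.ext_iff]
      rw [hx]; exact hfq2 x j
    have hgred : ∀ z : ℝ × ((Fin m → ℝ) × (Fin r → ℝ)),
        gradqf m r f (Int.fract z.1,
          (fun i => Int.fract (z.2.1 i), fun j => Int.fract (z.2.2 j))) = gradqf m r f z :=
      per_master (gradqf m r f) hg1 hg2 hg3
    -- periodicity of G in (t,q)
    have hGred : ∀ z : ℝ × ((Fin m → ℝ) × (Fin r → ℝ)), ∀ p' : (Fin m → ℝ) × (Fin r → ℝ),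
        G (Int.fract z.1,
          ((fun i => Int.fract (z.2.1 i), fun j => Int.fract (z.2.2 j)), p')) =
        G (z.1, (z.2, p')) := by
      have := per_master (m := m) (r := r)
        (fun z => (fun p' => G (z.1, (z.2, p'))))
        (fun z => funext fun p' => hGt (z.1, (z.2, p')))
        (fun z i => funext fun p' => hGq1 (z.1, (z.2, p')) i)
        (fun z j => funext fun p' => hGq2 (z.1, (z.2, p')) j)
      exact fun z p' => congrFun (this z) p'
    -- the fundamental domain
    have hDmem : ∀ z : ℝ × ((Fin m → ℝ) × (Fin r → ℝ)),
        (Int.fract z.1, ((fun i => Int.fract (z.2.1 i)), (fun j => Int.fract (z.2.2 j)))) ∈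
          Set.Icc (0:ℝ) 1 ×ˢ (Set.Icc (0 : Fin m → ℝ) 1 ×ˢ Set.Icc (0 : Fin r → ℝ) 1) := by
      intro z
      refine ⟨⟨Int.fract_nonneg _, (Int.fract_lt_one _).le⟩, ⟨?_, ?_⟩⟩ <;>
        exact Set.mem_Icc.2 ⟨fun i => Int.fract_nonneg _, fun i => (Int.fract_lt_one _).le⟩
    have hDcomp : IsCompact (Set.Icc (0:ℝ) 1 ×ˢ
        (Set.Icc (0 : Fin m → ℝ) 1 ×ˢ Set.Icc (0 : Fin r → ℝ) 1)) :=
      isCompact_Icc.prod (isCompact_Icc.prod isCompact_Icc)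
    -- bound on the gradient
    obtain ⟨M₀, hM₀⟩ := hDcomp.exists_bound_of_continuousOn hgcd.continuous.continuousOn
    set M : ℝ := max M₀ 0 with hMdef
    have hM0 : 0 ≤ M := le_max_right _ _
    have hgM : ∀ (t : ℝ) (q : (Fin m → ℝ) × (Fin r → ℝ)), ‖gradqf m r f (t, q)‖ ≤ M := by
      intro t q
      rw [← hgred (t, q)]
      exact le_trans (hM₀ _ (hDmem (t, q))) (le_max_left _ _)
    -- the big compact convex set S
    obtain ⟨R, hR⟩ := hK.isBounded.subset_closedBall 0
    set RM : ℝ := max R 0 with hRMdef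
    set S : Set ((Fin m → ℝ) × (Fin r → ℝ)) := Metric.closedBall 0 (RM + M) with hSdef
    have hSconv : Convex ℝ S := convex_closedBall _ _
    have hScomp : IsCompact S := isCompact_closedBall _ _
    have hball : ∀ p ∈ K, ∀ x : (Fin m → ℝ) × (Fin r → ℝ), dist x p ≤ M → x ∈ S := by
      intro p hp x hx
      have h1 : dist p 0 ≤ RM := le_trans (hR hp) (le_max_left _ _)
      have h2 : dist x 0 ≤ dist x p + dist p 0 := dist_triangle _ _ _
      simp only [hSdef, Metric.mem_closedBall]
      linarith
    have hKS : ∀ p ∈ K, p ∈ S := fun p hp => hball p hp p (by simp [hM0])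
    -- second derivative bound for h on S
    have hh3 : ContDiff ℝ (⊤ : ℕ∞) (fderiv ℝ (fderiv ℝ h)) := hhd.fderiv_right (by simp)
    obtain ⟨C₂₀, hC₂₀⟩ := hScomp.exists_bound_of_continuousOn
      (E := (Fin m → ℝ) × (Fin r → ℝ) →L[ℝ] (Fin m → ℝ) × (Fin r → ℝ) →L[ℝ] ℝ)
      (f := fderiv ℝ (fderiv ℝ h)) hh3.continuous.continuousOn
    set C₂ : ℝ := max C₂₀ 0 with hC₂def
    have hC₂0 : 0 ≤ C₂ := le_max_right _ _
    have hlip : ∀ x ∈ S, ∀ y ∈ S, ‖fderiv ℝ h x - fderiv ℝ h y‖ ≤ C₂ * ‖x - y‖ := by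
      intro x hx y hy
      exact hSconv.norm_image_sub_le_of_norm_fderiv_le
        (fun z _ => (hhd.differentiable (by simp)) z)
        (fun z hz => le_trans (hC₂₀ z hz) (le_max_left _ _)) hy hx
    -- Taylor estimate for h
    have hTay : ∀ p ∈ K, ∀ v : (Fin m → ℝ) × (Fin r → ℝ), ‖v‖ ≤ M →
        ‖h (p + v) - h p - fderiv ℝ h p v‖ ≤ C₂ * ‖v‖ ^ 2 := by
      intro p hp v hv
      have hsub : Metric.closedBall p ‖v‖ ⊆ S := fun x hx =>
        hball p hp x (le_trans (Metric.mem_closedBall.1 hx) hv)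
      have hps : p ∈ Metric.closedBall p ‖v‖ := Metric.mem_closedBall_self (norm_nonneg v)
      have hpvs : p + v ∈ Metric.closedBall p ‖v‖ := by
        simp [Metric.mem_closedBall, dist_eq_norm, add_sub_cancel_left]
      have hbd := (convex_closedBall p ‖v‖).norm_image_sub_le_of_norm_hasFDerivWithin_le'
        (f' := fderiv ℝ h) (φ := fderiv ℝ h p) (C := C₂ * ‖v‖)
        (fun x _ => (hhdiff x).hasFDerivAt.hasFDerivWithinAt)
        (fun x hx => by
          have h1 := hlip x (hsub hx) p (hsub hps)
          have h2 : ‖x - p‖ ≤ ‖v‖ := by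
            rw [← dist_eq_norm]; exact Metric.mem_closedBall.1 hx
          calc ‖fderiv ℝ h x - fderiv ℝ h p‖ ≤ C₂ * ‖x - p‖ := h1
            _ ≤ C₂ * ‖v‖ := mul_le_mul_of_nonneg_left h2 hC₂0)
        hps hpvs
      have he : p + v - p = v := add_sub_cancel_left p v
      rw [he] at hbd
      calc ‖h (p + v) - h p - fderiv ℝ h p v‖ ≤ C₂ * ‖v‖ * ‖v‖ := hbd
        _ = C₂ * ‖v‖ ^ 2 := by ring
    -- Lipschitz bound for G on W
    set W : Set (ℝ × ((Fin m → ℝ) × (Fin r → ℝ)) × ((Fin m → ℝ) × (Fin r → ℝ))) :=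
      Set.Icc (0:ℝ) 1 ×ˢ ((Set.Icc (0 : Fin m → ℝ) 1 ×ˢ Set.Icc (0 : Fin r → ℝ) 1) ×ˢ S)
      with hWdef
    have hWcomp : IsCompact W :=
      isCompact_Icc.prod ((isCompact_Icc.prod isCompact_Icc).prod hScomp)
    have hWconv : Convex ℝ W :=
      (convex_Icc _ _).prod (((convex_Icc _ _).prod (convex_Icc _ _)).prod hSconv)
    have hGd : ContDiff ℝ (⊤ : ℕ∞) (fderiv ℝ G) := hG.fderiv_right (by simp)
    obtain ⟨C₃₀, hC₃₀⟩ := hWcomp.exists_bound_of_continuousOn hGd.continuous.continuousOn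
    set C₃ : ℝ := max C₃₀ 0 with hC₃def
    have hC₃0 : 0 ≤ C₃ := le_max_right _ _
    have hGlip : ∀ x ∈ W, ∀ y ∈ W, |G x - G y| ≤ C₃ * ‖x - y‖ := by
      intro x hx y hy
      have : ‖G x - G y‖ ≤ C₃ * ‖x - y‖ :=
        hWconv.norm_image_sub_le_of_norm_fderiv_le
          (fun z _ => (hG.differentiable (by simp)) z)
          (fun z hz => le_trans (hC₃₀ z hz) (le_max_left _ _)) hy hx
      rwa [Real.norm_eq_abs] at this
    -- the constant
    refine ⟨C₂ * M ^ 2 + C₃ * M + 1, by positivity, ?_⟩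
    rintro ε ⟨hε0, hε1⟩ t e q p hp
    set g : (Fin m → ℝ) × (Fin r → ℝ) := gradqf m r f (t, q) with hgdef
    set v : (Fin m → ℝ) × (Fin r → ℝ) := ε ^ 2 • g with hvdef
    have hε2 : (0:ℝ) ≤ ε ^ 2 := sq_nonneg ε
    have hε21 : ε ^ 2 ≤ 1 := pow_le_one₀ hε0.le hε1
    have hgM' : ‖g‖ ≤ M := hgM t q
    have hnv : ‖v‖ = ε ^ 2 * ‖g‖ := by
      rw [hvdef, norm_smul, Real.norm_eq_abs, abs_of_nonneg hε2]
    have hv : ‖v‖ ≤ M := by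
      rw [hnv]
      calc ε ^ 2 * ‖g‖ ≤ 1 * M := by
            exact mul_le_mul hε21 hgM' (norm_nonneg g) zero_le_one
        _ = M := one_mul M
    -- the key algebraic identity
    have e1 : pairdot m r (gradh m r h p - gradh m r h p₀) g =
        fderiv ℝ h p g - ω ⬝ᵥ g.1 := by
      have l1 : ∀ p' : (Fin m → ℝ) × (Fin r → ℝ),
          pairdot m r (gradh m r h p') g = fderiv ℝ h p' g :=
        fun p' => (clm_pair_apply (fderiv ℝ h p') g).symm
      have l2 : pairdot m r (gradh m r h p - gradh m r h p₀) g =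
          pairdot m r (gradh m r h p) g - pairdot m r (gradh m r h p₀) g := by
        simp [pairdot, sub_dotProduct]; ring
      rw [l2, l1, l1, hgrad]
    have e2 : fderiv ℝ f (t, q) (1, 0) = G (t, q, p₀) - V q.2 - ω ⬝ᵥ g.1 := by
      have l3 : fderiv ℝ f (t, q) (1, (ω, 0)) =
          fderiv ℝ f (t, q) (1, 0) + ω ⬝ᵥ g.1 := by
        have hsplit : ((1:ℝ), (ω, (0 : Fin r → ℝ))) =
            ((1:ℝ), ((0 : Fin m → ℝ), (0 : Fin r → ℝ))) + ((0:ℝ), (ω, (0 : Fin r → ℝ))) := by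
          simp [Prod.ext_iff]
        rw [hsplit, map_add]
        congr 1
        have hc := clm_pair_apply
          ((fderiv ℝ f (t, q)).comp (ContinuousLinearMap.inr ℝ ℝ ((Fin m → ℝ) × (Fin r → ℝ))))
          (ω, (0 : Fin r → ℝ))
        simp only [ContinuousLinearMap.coe_comp', Function.comp_apply,
          ContinuousLinearMap.inr_apply, dotProduct_zero, add_zero] at hc
        rw [hc, dotProduct_comm]
        rfl
      have l4 := hhom (t, q)
      rw [l3] at l4
      linarith
    have key : (h (p + ε ^ 2 • gradqf m r f (t, q)) +
          (e + ε ^ 2 * fderiv ℝ f (t, q) (1, 0)) -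
          ε ^ 2 * G (t, q, p + ε ^ 2 • gradqf m r f (t, q))) -
        (h p + e - ε ^ 2 * V q.2 - ε ^ 2 * (G (t, q, p) - G (t, q, p₀) -
          pairdot m r (gradh m r h p - gradh m r h p₀) (gradqf m r f (t, q)))) =
        (h (p + v) - h p - ε ^ 2 * fderiv ℝ h p g) -
          ε ^ 2 * (G (t, q, p + v) - G (t, q, p)) := by
      rw [← hgdef, ← hvdef, e1, e2]
      ring
    rw [key]
    -- estimate the two pieces
    have hA : |h (p + v) - h p - ε ^ 2 * fderiv ℝ h p g| ≤ C₂ * M ^ 2 * ε ^ 4 := by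
      have hfs : fderiv ℝ h p v = ε ^ 2 * fderiv ℝ h p g := by
        rw [hvdef, (fderiv ℝ h p).map_smul, smul_eq_mul]
      have := hTay p hp v hv
      rw [hfs] at this
      rw [← Real.norm_eq_abs]
      refine le_trans this ?_
      have hv2 : ‖v‖ ^ 2 ≤ (ε ^ 2 * M) ^ 2 := by
        have : ‖v‖ ≤ ε ^ 2 * M := by
          rw [hnv]; exact mul_le_mul_of_nonneg_left hgM' hε2
        exact pow_le_pow_left₀ (norm_nonneg v) this 2
      calc C₂ * ‖v‖ ^ 2 ≤ C₂ * (ε ^ 2 * M) ^ 2 := mul_le_mul_of_nonneg_left hv2 hC₂0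
        _ = C₂ * M ^ 2 * ε ^ 4 := by ring
    have hB : |G (t, q, p + v) - G (t, q, p)| ≤ C₃ * (ε ^ 2 * M) := by
      set t' : ℝ := Int.fract t with ht'
      set q1' : Fin m → ℝ := fun i => Int.fract (q.1 i) with hq1'
      set q2' : Fin r → ℝ := fun j => Int.fract (q.2 j) with hq2'
      have hr1 : G (t', ((q1', q2'), p + v)) = G (t, (q, p + v)) := hGred (t, q) (p + v)
      have hr2 : G (t', ((q1', q2'), p)) = G (t, (q, p)) := hGred (t, q) p
      rw [← hr1, ← hr2]
      have hd := hDmem (t, q)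
      have hx1 : (t', ((q1', q2'), p + v)) ∈ W := by
        refine ⟨hd.1, ⟨hd.2, ?_⟩⟩
        refine hball p hp (p + v) ?_
        rw [dist_eq_norm, add_sub_cancel_left]; exact hv
      have hx2 : (t', ((q1', q2'), p)) ∈ W := ⟨hd.1, ⟨hd.2, hKS p hp⟩⟩
      have hdiff : (t', ((q1', q2'), p + v)) - (t', ((q1', q2'), p)) =
          ((0:ℝ), ((0 : (Fin m → ℝ) × (Fin r → ℝ)), v)) := by
        have hcomp : (t', ((q1', q2'), p + v)) - (t', ((q1', q2'), p)) =
            (t' - t', (((q1', q2') : (Fin m → ℝ) × (Fin r → ℝ)) - (q1', q2'), (p + v) - p)) := rfl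
        rw [hcomp, sub_self, sub_self, add_sub_cancel_left]
      have hnorm : ‖(t', ((q1', q2'), p + v)) - (t', ((q1', q2'), p))‖ = ‖v‖ := by
        rw [hdiff, Prod.norm_def, Prod.norm_def, norm_zero, norm_zero,
          max_eq_right (norm_nonneg v), max_eq_right (norm_nonneg v)]
      have := hGlip _ hx1 _ hx2
      rw [hnorm] at this
      refine le_trans this ?_
      have : ‖v‖ ≤ ε ^ 2 * M := by rw [hnv]; exact mul_le_mul_of_nonneg_left hgM' hε2
      exact mul_le_mul_of_nonneg_left this hC₃0
    calc |(h (p + v) - h p - ε ^ 2 * fderiv ℝ h p g) -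
          ε ^ 2 * (G (t, q, p + v) - G (t, q, p))|
        ≤ |h (p + v) - h p - ε ^ 2 * fderiv ℝ h p g| +
          |ε ^ 2 * (G (t, q, p + v) - G (t, q, p))| := abs_sub _ _
      _ ≤ C₂ * M ^ 2 * ε ^ 4 + ε ^ 2 * (C₃ * (ε ^ 2 * M)) := by
          refine add_le_add hA ?_
          rw [abs_mul, abs_of_nonneg hε2]
          exact mul_le_mul_of_nonneg_left hB hε2
      _ = (C₂ * M ^ 2 + C₃ * M) * ε ^ 4 := by ring
      _ ≤ (C₂ * M ^ 2 + C₃ * M + 1) * ε ^ 4 := by nlinarith [pow_pos hε0 4]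
  exact ⟨P1, P2, P3⟩
end
end

section
/- Let a > 0 and let A : ℝ^{n_z} → Mat_{n_x}(ℝ) and B : ℝ^{n_z} → Mat_{n_y}(ℝ) be matrix-valued functions satisfying ⟨A(z)x, x⟩ ≥ a‖x‖² and ⟨B(z)y, y⟩ ≥ a‖y‖² for all z,x,y. Let ρ_x, ρ_y ≥ 0 and let (z,x,y) : ℝ → ℝ^{n_z}×ℝ^{n_x}×ℝ^{n_y} be a C¹ curve, defined for all t ∈ ℝ, satisfying ‖x(t)‖ < 1 and ‖y(t)‖ < 1 for all t, and x'(t) = A(z(t))x(t) + R_x(t), y'(t) = −B(z(t))y(t) + R_y(t) with ‖R_x(t)‖ ≤ ρ_x and ‖R_y(t)‖ ≤ ρ_y for all t. Then ‖x(t)‖ ≤ 2ρ_x/a and ‖y(t)‖ ≤ 2ρ_y/a for all t ∈ ℝ. (This is the localization estimate of the normally hyperbolic graph theorem: any complete orbit of the perturbed slow–fast system staying in the unit domain has hyperbolic coordinates of size at most (2/a) times the size of the perturbation.) -/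
/-!
Along a solution of `x' = v` with `⟪v, x⟫ ≥ a‖x‖² - ρ‖x‖`, the quantity `‖x‖²` grows at rate at
least `2‖x‖(a‖x‖ - ρ)`. If `‖x t₀‖ = r > ρ / a`, this rate is bounded below by the positive
constant `2r(ar - ρ)` as long as `‖x‖ ≥ r`, so a comparison with a linear function shows that
`‖x‖²` grows at least linearly from `t₀` on and the orbit is unbounded. The contracting
coordinate `y` is expanding in reversed time, so the same argument bounds it.
-/

open RealInnerProductSpace Set

theorem add_mul_sub_le_of_deriv_gt_on_superlevel {f f' : ℝ → ℝ} {t₀ c δ : ℝ}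
    (hf : ∀ t, HasDerivAt f (f' t) t) (hδ : 0 ≤ δ) (h₀ : c ≤ f t₀)
    (hgrow : ∀ t, c ≤ f t → δ < f' t) {t : ℝ} (ht : t₀ ≤ t) :
    c + δ * (t - t₀) ≤ f t := by
  have hfence := image_le_of_deriv_right_lt_deriv_boundary (a := t₀) (b := t)
    (f := fun s => -f s) (f' := fun s => -f' s) (B := fun s => -(c + δ * (s - t₀)))
    (B' := fun _ => -(δ * 1))
    (fun s _ => (hf s).continuousAt.neg.continuousWithinAt)
    (fun s _ => (hf s).neg.hasDerivWithinAt) (by simpa using h₀)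
    (fun s => (((hasDerivAt_id s).sub_const t₀).const_mul δ |>.const_add c).neg)
    (fun s hs hfs => neg_lt_neg <| (mul_one δ).trans_lt <| hgrow s <| by
      nlinarith [neg_inj.mp hfs, mul_nonneg hδ (sub_nonneg.mpr hs.1)])
  simpa using hfence ⟨ht, le_rfl⟩

variable {E : Type*} [NormedAddCommGroup E] [InnerProductSpace ℝ E]

theorem sub_mul_norm_le_inner_add {a ρ : ℝ} {u w R : E} (hw : a * ‖u‖ ^ 2 ≤ ⟪w, u⟫)
    (hR : ‖R‖ ≤ ρ) : a * ‖u‖ ^ 2 - ρ * ‖u‖ ≤ ⟪w + R, u⟫ := by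
  have hRu : -(‖R‖ * ‖u‖) ≤ ⟪R, u⟫ := (abs_le.mp (abs_real_inner_le_norm R u)).1
  have hρu : ‖R‖ * ‖u‖ ≤ ρ * ‖u‖ := mul_le_mul_of_nonneg_right hR (norm_nonneg u)
  rw [inner_add_left]
  linarith

theorem norm_le_div_of_bounded_expanding_orbit {a ρ M : ℝ} {x v : ℝ → E} (ha : 0 < a)
    (hρ : 0 ≤ ρ) (hx : ∀ t, HasDerivAt x (v t) t)
    (hv : ∀ t, a * ‖x t‖ ^ 2 - ρ * ‖x t‖ ≤ ⟪v t, x t⟫) (hM : ∀ t, ‖x t‖ ≤ M) (t₀ : ℝ) :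
    ‖x t₀‖ ≤ ρ / a := by
  by_contra! hr
  set r := ‖x t₀‖
  have hr₀ : 0 < r := (div_nonneg hρ ha.le).trans_lt hr
  have hρr : ρ < a * r := by rwa [div_lt_iff₀' ha] at hr
  set δ := r * (a * r - ρ)
  have hδ : 0 < δ := mul_pos hr₀ (sub_pos.mpr hρr)
  have hgrow : ∀ t, r ^ 2 ≤ ‖x t‖ ^ 2 → δ < 2 * ⟪x t, v t⟫ := fun t ht => by
    have hrt : r ≤ ‖x t‖ := (pow_le_pow_iff_left₀ hr₀.le (norm_nonneg _) two_ne_zero).mp ht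
    rw [real_inner_comm]
    nlinarith [hv t, mul_le_mul hrt (sub_le_sub_right (mul_le_mul_of_nonneg_left hrt ha.le) ρ)
      (sub_pos.mpr hρr).le (norm_nonneg _)]
  have hlin := add_mul_sub_le_of_deriv_gt_on_superlevel (fun t => (hx t).norm_sq) hδ.le le_rfl
    hgrow (t := t₀ + M ^ 2 / δ) (by have := div_nonneg (sq_nonneg M) hδ.le; linarith)
  have hbdd : ‖x (t₀ + M ^ 2 / δ)‖ ^ 2 ≤ M ^ 2 := pow_le_pow_left₀ (norm_nonneg _) (hM _) 2
  rw [add_sub_cancel_left, mul_div_cancel₀ _ hδ.ne'] at hlin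
  nlinarith

theorem normally_hyperbolic_localization_general
    (nz nx ny : ℕ) (a : ℝ) (ha : 0 < a)
    (A : EuclideanSpace ℝ (Fin nz) → Matrix (Fin nx) (Fin nx) ℝ)
    (B : EuclideanSpace ℝ (Fin nz) → Matrix (Fin ny) (Fin ny) ℝ)
    (hA : ∀ z x, a * ‖x‖ ^ 2 ≤ ⟪Matrix.toEuclideanLin (A z) x, x⟫)
    (hB : ∀ z y, a * ‖y‖ ^ 2 ≤ ⟪Matrix.toEuclideanLin (B z) y, y⟫)
    (ρx ρy : ℝ)
    (z : ℝ → EuclideanSpace ℝ (Fin nz))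
    (x : ℝ → EuclideanSpace ℝ (Fin nx))
    (y : ℝ → EuclideanSpace ℝ (Fin ny))
    (Rx : ℝ → EuclideanSpace ℝ (Fin nx))
    (Ry : ℝ → EuclideanSpace ℝ (Fin ny))
    (hx : ∀ t : ℝ, HasDerivAt x (Matrix.toEuclideanLin (A (z t)) (x t) + Rx t) t)
    (hy : ∀ t : ℝ, HasDerivAt y (-(Matrix.toEuclideanLin (B (z t)) (y t)) + Ry t) t)
    (hx1 : ∀ t : ℝ, ‖x t‖ < 1) (hy1 : ∀ t : ℝ, ‖y t‖ < 1)
    (hRx : ∀ t : ℝ, ‖Rx t‖ ≤ ρx) (hRy : ∀ t : ℝ, ‖Ry t‖ ≤ ρy) :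
    (∀ t : ℝ, ‖x t‖ ≤ 2 * ρx / a) ∧ (∀ t : ℝ, ‖y t‖ ≤ 2 * ρy / a) := by
  have hρx : 0 ≤ ρx := (norm_nonneg _).trans (hRx 0)
  have hρy : 0 ≤ ρy := (norm_nonneg _).trans (hRy 0)
  have hx' := norm_le_div_of_bounded_expanding_orbit ha hρx hx
    (fun t => sub_mul_norm_le_inner_add (hA _ _) (hRx t)) (fun t => (hx1 t).le)
  have hy_rev : ∀ t, HasDerivAt (fun s => y (-s))
      (Matrix.toEuclideanLin (B (z (-t))) (y (-t)) + -Ry (-t)) t := fun t => by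
    simpa [neg_add, Function.comp_def] using (hy (-t)).scomp t (hasDerivAt_neg t)
  have hy' := norm_le_div_of_bounded_expanding_orbit ha hρy hy_rev
    (fun t => sub_mul_norm_le_inner_add (hB _ _) ((norm_neg _).trans_le (hRy (-t))))
    (fun t => (hy1 (-t)).le)
  refine ⟨fun t => (hx' t).trans ?_, fun t => (neg_neg t ▸ hy' (-t)).trans ?_⟩ <;>
    gcongr <;> linarith

/-- localization estimate for complete orbits of the perturbed
slow–fast system: if `x' = A(z)x + R_x`, `y' = -B(z)y + R_y` along a complete C¹ curve
`(z,x,y)` staying in the unit domain, with `⟨A(z)x,x⟩ ≥ a‖x‖²`, `⟨B(z)y,y⟩ ≥ a‖y‖²`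
and `‖R_x‖ ≤ ρ_x`, `‖R_y‖ ≤ ρ_y`, then `‖x(t)‖ ≤ 2ρ_x/a` and `‖y(t)‖ ≤ 2ρ_y/a`. -/
theorem normally_hyperbolic_localization
    (nz nx ny : ℕ) (a : ℝ) (ha : 0 < a)
    (A : EuclideanSpace ℝ (Fin nz) → Matrix (Fin nx) (Fin nx) ℝ)
    (B : EuclideanSpace ℝ (Fin nz) → Matrix (Fin ny) (Fin ny) ℝ)
    (hA : ∀ z x, a * ‖x‖ ^ 2 ≤ ⟪Matrix.toEuclideanLin (A z) x, x⟫)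
    (hB : ∀ z y, a * ‖y‖ ^ 2 ≤ ⟪Matrix.toEuclideanLin (B z) y, y⟫)
    (ρx ρy : ℝ) (hρx : 0 ≤ ρx) (hρy : 0 ≤ ρy)
    (z : ℝ → EuclideanSpace ℝ (Fin nz))
    (x : ℝ → EuclideanSpace ℝ (Fin nx))
    (y : ℝ → EuclideanSpace ℝ (Fin ny))
    (Rx : ℝ → EuclideanSpace ℝ (Fin nx))
    (Ry : ℝ → EuclideanSpace ℝ (Fin ny))
    (hz : Differentiable ℝ z)
    (hx : ∀ t : ℝ, HasDerivAt x (Matrix.toEuclideanLin (A (z t)) (x t) + Rx t) t)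
    (hy : ∀ t : ℝ, HasDerivAt y (-(Matrix.toEuclideanLin (B (z t)) (y t)) + Ry t) t)
    (hxRcont : Continuous Rx) (hyRcont : Continuous Ry)
    (hx1 : ∀ t : ℝ, ‖x t‖ < 1) (hy1 : ∀ t : ℝ, ‖y t‖ < 1)
    (hRx : ∀ t : ℝ, ‖Rx t‖ ≤ ρx) (hRy : ∀ t : ℝ, ‖Ry t‖ ≤ ρy) :
    (∀ t : ℝ, ‖x t‖ ≤ 2 * ρx / a) ∧ (∀ t : ℝ, ‖y t‖ ≤ 2 * ρy / a) :=
  normally_hyperbolic_localization_general nz nx ny a ha A B hA hB ρx ρy z x y Rx Ry hx hy hx1 hy1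
    hRx hRy
end

section
/- Let a > 0, c ≥ 0, M > 0, and let x : ℝ → ℝ^k be a C¹ curve defined for all t ∈ ℝ with ‖x(t)‖ ≤ M for all t and ⟨x'(t), x(t)⟩ ≥ ‖x(t)‖·(a‖x(t)‖ − c) for all t ∈ ℝ. Then ‖x(t)‖ ≤ 2c/a for all t ∈ ℝ. -/
open RealInnerProductSpace Filter

/-! If `‖x‖ > 2c/a` at some time, then from that time on `‖x‖²` stays above its value there and
grows at a rate at least `a‖x‖²`, so it tends to infinity, contradicting boundedness. -/

/-- The line can only touch `f` from below where `f ≥ y`, and there `f` grows strictly faster. -/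
theorem affine_le_of_deriv_gt_on_superlevel {f f' : ℝ → ℝ} {y δ t₀ t : ℝ}
    (hf : ∀ s, HasDerivAt f (f' s) s) (hδ : 0 ≤ δ) (ht₀ : y ≤ f t₀)
    (hf' : ∀ s, y ≤ f s → δ < f' s) (ht : t₀ ≤ t) :
    f t₀ + δ * (t - t₀) ≤ f t := by
  have hline : ∀ s, HasDerivAt (fun s => f t₀ + δ * (s - t₀)) δ s := fun s => by
    simpa using ((hasDerivAt_id s).sub_const t₀).const_mul δ |>.const_add (f t₀)
  refine image_le_of_deriv_right_lt_deriv_boundary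
    (fun s _ => (hline s).continuousAt.continuousWithinAt)
    (fun s _ => (hline s).hasDerivWithinAt) (by simp) hf ?_ ⟨ht, le_rfl⟩
  rintro s ⟨hs, -⟩ hfs
  refine hf' s (ht₀.trans ?_)
  rw [← hfs]
  nlinarith

theorem tendsto_atTop_of_deriv_gt_on_superlevel {f f' : ℝ → ℝ} {y δ t₀ : ℝ}
    (hf : ∀ s, HasDerivAt f (f' s) s) (hδ : 0 < δ) (ht₀ : y ≤ f t₀)
    (hf' : ∀ s, y ≤ f s → δ < f' s) :
    Tendsto f atTop atTop := by
  have hline : Tendsto (fun t => f t₀ + δ * (t - t₀)) atTop atTop :=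
    tendsto_atTop_add_const_left _ _ <|
      (tendsto_atTop_add_const_right _ _ tendsto_id).const_mul_atTop hδ
  exact tendsto_atTop_mono' _ (eventually_ge_atTop t₀ |>.mono fun t ht =>
    affine_le_of_deriv_gt_on_superlevel hf hδ.le ht₀ hf' ht) hline

theorem mul_sq_lt_two_mul_mul_sub {a c s : ℝ} (ha : 0 < a) (hs : 2 * c / a < s) (hs₀ : 0 < s) :
    a * s ^ 2 < 2 * (s * (a * s - c)) := by
  have : 2 * c < a * s := by rw [div_lt_iff₀ ha] at hs; linarith
  nlinarith

theorem localization_differential_inequality_general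
    (k : ℕ) (a c M : ℝ) (ha : 0 < a) (hc : 0 ≤ c)
    (x x' : ℝ → EuclideanSpace ℝ (Fin k))
    (hderiv : ∀ t : ℝ, HasDerivAt x (x' t) t)
    (hbound : ∀ t : ℝ, ‖x t‖ ≤ M)
    (hineq : ∀ t : ℝ, ‖x t‖ * (a * ‖x t‖ - c) ≤ ⟪x' t, x t⟫) :
    ∀ t : ℝ, ‖x t‖ ≤ 2 * c / a := by
  intro t₀
  by_contra! hfar
  set r := ‖x t₀‖
  have hr : 0 < r := (by positivity : 0 ≤ 2 * c / a).trans_lt hfar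
  have hgrowth : ∀ t, r ^ 2 ≤ ‖x t‖ ^ 2 → a * r ^ 2 < 2 * ⟪x t, x' t⟫ := fun t ht => by
    have hrt : r ≤ ‖x t‖ := le_of_pow_le_pow_left₀ two_ne_zero (norm_nonneg _) ht
    calc a * r ^ 2 ≤ a * ‖x t‖ ^ 2 := by gcongr
      _ < 2 * (‖x t‖ * (a * ‖x t‖ - c)) :=
        mul_sq_lt_two_mul_mul_sub ha (hfar.trans_le hrt) (hr.trans_le hrt)
      _ ≤ 2 * ⟪x t, x' t⟫ := by rw [real_inner_comm]; linarith [hineq t]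
  have hunbdd : Tendsto (‖x ·‖ ^ 2) atTop atTop :=
    tendsto_atTop_of_deriv_gt_on_superlevel (fun t => (hderiv t).norm_sq) (by positivity)
      le_rfl hgrowth
  obtain ⟨t, ht⟩ := (hunbdd.eventually_gt_atTop (M ^ 2)).exists
  exact ht.not_ge (pow_le_pow_left₀ (norm_nonneg _) (hbound t) 2)

/-- If a globally defined C¹ curve `x : ℝ → ℝᵏ` stays bounded
(`‖x t‖ ≤ M`) and satisfies the differential inequality
`⟨x'(t), x(t)⟩ ≥ ‖x(t)‖ (a‖x(t)‖ − c)`, then `‖x(t)‖ ≤ 2c/a` for all `t`. -/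
theorem localization_differential_inequality
    (k : ℕ) (a c M : ℝ) (ha : 0 < a) (hc : 0 ≤ c) (hM : 0 < M)
    (x x' : ℝ → EuclideanSpace ℝ (Fin k))
    (hderiv : ∀ t : ℝ, HasDerivAt x (x' t) t)
    (hcont : Continuous x')
    (hbound : ∀ t : ℝ, ‖x t‖ ≤ M)
    (hineq : ∀ t : ℝ, ‖x t‖ * (a * ‖x t‖ - c) ≤ ⟪x' t, x t⟫) :
    ∀ t : ℝ, ‖x t‖ ≤ 2 * c / a :=
  localization_differential_inequality_general k a c M ha hc x x' hderiv hbound hineq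
end

section
/- Let A and B be symmetric positive definite n×n real matrices. Then there is a unique symmetric positive definite matrix L satisfying L²AL² = B, and it is given by the explicit formula L = (A^{−1/2}(A^{1/2}BA^{1/2})^{1/2}A^{−1/2})^{1/2}. -/
/-!
Write `S = A^{1/2}`. Since `S` is invertible, `X A X = B` is equivalent to
`(S X S)² = S B S`, and for `X = L²` the matrix `S X S` is positive definite. Uniqueness of
positive square roots therefore forces `S L² S = (S B S)^{1/2}`, i.e.
`L² = S⁻¹ (S B S)^{1/2} S⁻¹`, and a second use of uniqueness pins down `L`; conversely this
choice of `L` solves the equation.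
-/

/-- `S` is the (unique) symmetric positive definite square root of `M`. -/
def IsPosDefSqrt {n : ℕ} (S M : Matrix (Fin n) (Fin n) ℝ) : Prop :=
  S.PosDef ∧ S * S = M

open Matrix
open scoped MatrixOrder ComplexOrder

lemma IsUnit.conj_mul_self_eq_conj_iff {M : Type*} [Monoid M] {s x b : M} (hs : IsUnit s) :
    s * x * s * (s * x * s) = s * b * s ↔ x * (s * s) * x = b := by
  rw [show s * x * s * (s * x * s) = s * (x * (s * s) * x) * s by simp only [mul_assoc],
    hs.mul_left_inj, hs.mul_right_inj]

namespace Matrix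

variable {m 𝕜 : Type*} [Fintype m] [DecidableEq m] [RCLike 𝕜]

lemma mul_mul_eq_iff_eq_inv_mul_mul_inv {α : Type*} [CommRing α] {S X C : Matrix m m α}
    (hS : IsUnit S) : S * X * S = C ↔ X = S⁻¹ * C * S⁻¹ := by
  have hS' : IsUnit S.det := (isUnit_iff_isUnit_det S).mp hS
  constructor <;> rintro rfl <;> simp [Matrix.mul_assoc, hS']

lemma PosSemidef.eq_of_mul_self_eq {S T : Matrix m m 𝕜} (hS : S.PosSemidef) (hT : T.PosSemidef)
    (h : S * S = T * T) : S = T :=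
  (CFC.mul_self_eq_mul_self_iff S T hS.nonneg hT.nonneg).mp h

lemma PosDef.posDef_sqrt {M : Matrix m m 𝕜} (hM : M.PosDef) : (CFC.sqrt M).PosDef :=
  hM.isStrictlyPositive.sqrt.posDef

lemma PosDef.exists_posDef_mul_self_eq {M : Matrix m m 𝕜} (hM : M.PosDef) :
    ∃ S : Matrix m m 𝕜, S.PosDef ∧ S * S = M :=
  ⟨CFC.sqrt M, hM.posDef_sqrt, CFC.sqrt_mul_sqrt_self M hM.posSemidef.nonneg⟩

lemma PosDef.mul_mul_same {M S : Matrix m m 𝕜} (hM : M.PosDef) (hS : S.IsHermitian)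
    (hSu : IsUnit S) : (S * M * S).PosDef := by
  have h := (IsUnit.posDef_star_left_conjugate_iff hSu).mpr hM
  rwa [star_eq_conjTranspose, hS.eq] at h

lemma PosDef.mul_self {S : Matrix m m 𝕜} (hS : S.PosDef) : (S * S).PosDef := by
  simpa using PosDef.one.mul_mul_same hS.isHermitian hS.isUnit

lemma PosDef.mul_mul_eq_iff_eq_inv_mul_sqrt_mul_inv {S A B C X : Matrix m m 𝕜} (hS : S.PosDef)
    (hSA : S * S = A) (hC : C.PosSemidef) (hCB : C * C = S * B * S) (hX : X.PosDef) :
    X * A * X = B ↔ X = S⁻¹ * C * S⁻¹ := by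
  rw [← mul_mul_eq_iff_eq_inv_mul_mul_inv hS.isUnit, ← hSA,
    ← hS.isUnit.conj_mul_self_eq_conj_iff, ← hCB]
  exact ⟨(hX.mul_mul_same hS.isHermitian hS.isUnit).posSemidef.eq_of_mul_self_eq hC,
    fun h => h ▸ rfl⟩

end Matrix

/-- for symmetric positive definite `A, B` there is a unique symmetric
positive definite `L` with `L²AL² = B`, and it is given by the formula
`L = (A^{-1/2} (A^{1/2} B A^{1/2})^{1/2} A^{-1/2})^{1/2}` (expressed here through the
unique positive definite square roots `S = A^{1/2}`, `C = (A^{1/2}BA^{1/2})^{1/2}`,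
`L = (S⁻¹ C S⁻¹)^{1/2}`). -/
theorem unique_posdef_L_solving_L2AL2_eq_B
    (n : ℕ) (A B : Matrix (Fin n) (Fin n) ℝ) (hA : A.PosDef) (hB : B.PosDef) :
    (∃! L : Matrix (Fin n) (Fin n) ℝ, L.PosDef ∧ L * L * A * (L * L) = B) ∧
    (∀ S C L : Matrix (Fin n) (Fin n) ℝ,
      IsPosDefSqrt S A → IsPosDefSqrt C (S * B * S) → IsPosDefSqrt L (S⁻¹ * C * S⁻¹) →
      L.PosDef ∧ L * L * A * (L * L) = B) := by
  refine ⟨?_, fun S C L ⟨hS, hSA⟩ ⟨hC, hCB⟩ ⟨hL, hLL⟩ => ⟨hL,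
    (hS.mul_mul_eq_iff_eq_inv_mul_sqrt_mul_inv hSA hC.posSemidef hCB hL.mul_self).mpr hLL⟩⟩
  obtain ⟨S, hS, hSA⟩ := hA.exists_posDef_mul_self_eq
  obtain ⟨C, hC, hCB⟩ := (hB.mul_mul_same hS.isHermitian hS.isUnit).exists_posDef_mul_self_eq
  obtain ⟨L, hL, hLL⟩ :=
    (hC.mul_mul_same hS.inv.isHermitian hS.inv.isUnit).exists_posDef_mul_self_eq
  have solves_iff {X : Matrix (Fin n) (Fin n) ℝ} (hX : X.PosDef) :=
    hS.mul_mul_eq_iff_eq_inv_mul_sqrt_mul_inv hSA hC.posSemidef hCB hX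
  refine ⟨L, ⟨hL, (solves_iff hL.mul_self).mpr hLL⟩, fun Y ⟨hY, hYB⟩ => ?_⟩
  exact hY.posSemidef.eq_of_mul_self_eq hL.posSemidef
    (((solves_iff hY.mul_self).mp hYB).trans hLL.symm)
end

section
/- Let A, B be symmetric positive definite n×n real matrices and let L be the unique symmetric positive definite matrix with L²AL² = B. Set D := LAL. Then D = L⁻¹BL⁻¹, D is symmetric positive definite, and for all q,p ∈ ℝⁿ the identity ½⟨Bp,p⟩ − ½⟨Aq,q⟩ = ⟨Dx,y⟩ holds, where x = (Lp + L⁻¹q)/√2 and y = (Lp − L⁻¹q)/√2. That is, the linear change of variables (q,p) ↦ (x,y) transforms the quadratic Hamiltonian H(q,p) = ½⟨Bp,p⟩ − ½⟨Aq,q⟩ into G(x,y) = ⟨Dx,y⟩. -/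
open Matrix

/-!
Since `L` is symmetric and invertible, `D = LAL` is a congruence transform of `A`, hence positive
definite, and `L D L = B`, `L⁻¹ D L⁻¹ = A`. With `u = Lp` and `v = L⁻¹q`, symmetry of `D` gives
`⟨D(u + v), u - v⟩ = ⟨Du, u⟩ - ⟨Dv, v⟩ = ⟨Bp, p⟩ - ⟨Aq, q⟩`, and the two factors `1/√2` supply
the `1/2`.
-/

namespace Matrix

variable {n R : Type*} [Fintype n]

theorem nonsing_inv_mul_mul_mul_nonsing_inv_cancel [DecidableEq n] [CommRing R]
    {L : Matrix n n R} (hL : IsUnit L.det) (M : Matrix n n R) :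
    L⁻¹ * (L * M * L) * L⁻¹ = M := by
  rw [Matrix.mul_assoc L, nonsing_inv_mul_cancel_left _ _ hL,
    mul_nonsing_inv_cancel_right _ _ hL]

theorem mulVec_mulVec_dotProduct_mulVec [CommSemiring R] (M N : Matrix n n R) (x : n → R) :
    M *ᵥ (N *ᵥ x) ⬝ᵥ N *ᵥ x = (Nᵀ * M * N) *ᵥ x ⬝ᵥ x := by
  rw [← mulVec_mulVec, ← mulVec_mulVec, mulVec_transpose, ← dotProduct_mulVec]

theorem mulVec_add_dotProduct_sub_of_transpose_eq [CommRing R] {M : Matrix n n R} (hM : Mᵀ = M)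
    (u v : n → R) :
    M *ᵥ (u + v) ⬝ᵥ (u - v) = M *ᵥ u ⬝ᵥ u - M *ᵥ v ⬝ᵥ v := by
  have hcross : M *ᵥ u ⬝ᵥ v = M *ᵥ v ⬝ᵥ u := by
    rw [dotProduct_comm, dotProduct_mulVec, ← mulVec_transpose, hM]
  rw [mulVec_add, add_dotProduct, dotProduct_sub, dotProduct_sub, hcross]
  ring

theorem mulVec_smul_dotProduct_smul [CommSemiring R] (M : Matrix n n R) (c : R) (x y : n → R) :
    M *ᵥ (c • x) ⬝ᵥ (c • y) = c * c * (M *ᵥ x ⬝ᵥ y) := by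
  rw [mulVec_smul, smul_dotProduct, dotProduct_smul, smul_smul, smul_eq_mul]

end Matrix

theorem quadratic_hamiltonian_normal_form_general
    (n : ℕ) (A B L : Matrix (Fin n) (Fin n) ℝ)
    (hA : A.PosDef) (hL : L.PosDef)
    (hLAL : L * L * A * (L * L) = B) :
    let D := L * A * L
    D = L⁻¹ * B * L⁻¹ ∧ D.PosDef ∧
    ∀ q p : Fin n → ℝ,
      (1 / 2) * (B.mulVec p ⬝ᵥ p) - (1 / 2) * (A.mulVec q ⬝ᵥ q) =
        D.mulVec ((Real.sqrt 2)⁻¹ • (L.mulVec p + L⁻¹.mulVec q)) ⬝ᵥ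
          ((Real.sqrt 2)⁻¹ • (L.mulVec p - L⁻¹.mulVec q)) := by
  intro D
  have hLdet : IsUnit L.det := (isUnit_iff_isUnit_det L).mp hL.isUnit
  have hLt : Lᵀ = L := hL.isHermitian.eq
  have hLinvt : (L⁻¹)ᵀ = L⁻¹ := by rw [transpose_nonsing_inv, hLt]
  have hDB : L * D * L = B := by simp only [D, ← hLAL, Matrix.mul_assoc]
  have hDA : L⁻¹ * D * L⁻¹ = A := nonsing_inv_mul_mul_mul_nonsing_inv_cancel hLdet A
  have hD : D.PosDef := by
    simpa only [hL.isHermitian.eq] using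
      hA.conjTranspose_mul_mul_same (mulVec_injective_of_isUnit hL.isUnit)
  have hDt : Dᵀ = D := hD.isHermitian.eq
  have hsqrt : (Real.sqrt 2)⁻¹ * (Real.sqrt 2)⁻¹ = 1 / 2 := by
    rw [← mul_inv, Real.mul_self_sqrt zero_le_two, one_div]
  refine ⟨by rw [← hDB, nonsing_inv_mul_mul_mul_nonsing_inv_cancel hLdet], hD, fun q p => ?_⟩
  rw [mulVec_smul_dotProduct_smul, hsqrt, mulVec_add_dotProduct_sub_of_transpose_eq hDt,
    mulVec_mulVec_dotProduct_mulVec, mulVec_mulVec_dotProduct_mulVec, hLt, hLinvt, hDB, hDA]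
  ring

/-- with `L` the unique symmetric positive definite matrix such that
`L²AL² = B`, the matrix `D := LAL` satisfies `D = L⁻¹BL⁻¹`, is symmetric positive
definite, and the change of variables `x = (Lp + L⁻¹q)/√2`, `y = (Lp − L⁻¹q)/√2`
transforms `½⟨Bp,p⟩ − ½⟨Aq,q⟩` into `⟨Dx,y⟩`. -/
theorem quadratic_hamiltonian_normal_form
    (n : ℕ) (A B L : Matrix (Fin n) (Fin n) ℝ)
    (hA : A.PosDef) (hB : B.PosDef) (hL : L.PosDef)
    (hLAL : L * L * A * (L * L) = B) :
    let D := L * A * L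
    D = L⁻¹ * B * L⁻¹ ∧ D.PosDef ∧
    ∀ q p : Fin n → ℝ,
      (1 / 2) * (B.mulVec p ⬝ᵥ p) - (1 / 2) * (A.mulVec q ⬝ᵥ q) =
        D.mulVec ((Real.sqrt 2)⁻¹ • (L.mulVec p + L⁻¹.mulVec q)) ⬝ᵥ
          ((Real.sqrt 2)⁻¹ • (L.mulVec p - L⁻¹.mulVec q)) :=
  quadratic_hamiltonian_normal_form_general n A B L hA hL hLAL
end

section
/- Let A, B be symmetric positive definite n×n real matrices, L the unique symmetric positive definite matrix with L²AL² = B, D := LAL, and T(q,p) = ((Lp + L⁻¹q)/√2, (Lp − L⁻¹q)/√2). Let M : ℝⁿ×ℝⁿ → ℝⁿ×ℝⁿ be the linear vector field M(q,p) = (Bp, Aq) of the Hamiltonian system q̇ = Bp, ṗ = Aq (the Hamiltonian vector field of H(q,p) = ½⟨Bp,p⟩ − ½⟨Aq,q⟩). Then T∘M∘T⁻¹(x,y) = (Dx, −Dy); i.e. in the variables (x,y) the equations of motion take the block-diagonal hyperbolic form ẋ = Dx, ẏ = −Dy. -/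
open Matrix

/-- in the variables `x = (Lp + L⁻¹q)/√2`, `y = (Lp − L⁻¹q)/√2`, the linear
Hamiltonian vector field `M(q,p) = (Bp, Aq)` becomes block-diagonal hyperbolic:
`T ∘ M ∘ T⁻¹ (x,y) = (Dx, −Dy)` with `D = LAL`. -/
theorem linear_hamiltonian_block_diagonalization
    (n : ℕ) (A B L : Matrix (Fin n) (Fin n) ℝ)
    (hA : A.PosDef) (hB : B.PosDef) (hL : L.PosDef)
    (hLAL : L * L * A * (L * L) = B) :
    let D := L * A * L
    let T : (Fin n → ℝ) × (Fin n → ℝ) → (Fin n → ℝ) × (Fin n → ℝ) := fun v =>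
      ((Real.sqrt 2)⁻¹ • (L.mulVec v.2 + L⁻¹.mulVec v.1),
       (Real.sqrt 2)⁻¹ • (L.mulVec v.2 - L⁻¹.mulVec v.1))
    let Tinv : (Fin n → ℝ) × (Fin n → ℝ) → (Fin n → ℝ) × (Fin n → ℝ) := fun w =>
      ((Real.sqrt 2)⁻¹ • L.mulVec (w.1 - w.2),
       (Real.sqrt 2)⁻¹ • L⁻¹.mulVec (w.1 + w.2))
    let M : (Fin n → ℝ) × (Fin n → ℝ) → (Fin n → ℝ) × (Fin n → ℝ) := fun v =>
      (B.mulVec v.2, A.mulVec v.1)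
    ∀ x y : Fin n → ℝ, T (M (Tinv (x, y))) = (D.mulVec x, -(D.mulVec y)) := by
  intro D T Tinv M x y
  have hdet : IsUnit L.det := isUnit_iff_ne_zero.mpr (ne_of_gt hL.det_pos)
  have := L.invertibleOfIsUnitDet hdet
  have hBD : L⁻¹ * B * L⁻¹ = D := by
    rw [← hLAL]
    simp only [D, Matrix.mul_assoc, Matrix.inv_mul_cancel_left_of_invertible]
    rw [Matrix.mul_inv_of_invertible, Matrix.mul_one]
  have hc : (Real.sqrt 2)⁻¹ * (Real.sqrt 2)⁻¹ = (2:ℝ)⁻¹ := by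
    rw [← mul_inv]
    norm_num [Real.mul_self_sqrt]
  have key1 : ∀ u, L *ᵥ (A *ᵥ (L *ᵥ u)) = (L * A * L) *ᵥ u := by
    intro u; simp [mulVec_mulVec, Matrix.mul_assoc]
  have key2 : ∀ u, L⁻¹ *ᵥ (B *ᵥ (L⁻¹ *ᵥ u)) = (L * A * L) *ᵥ u := by
    intro u; rw [mulVec_mulVec, mulVec_mulVec, hBD]
  simp only [T, Tinv, M, D, Prod.mk.injEq, mulVec_smul, key1, key2]
  constructor
  · rw [← smul_add, smul_smul, hc, mulVec_sub, mulVec_add]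
    module
  · rw [← smul_sub, smul_smul, hc, mulVec_sub, mulVec_add]
    module
end

section
/- Let A, B be symmetric positive definite n×n real matrices and L the unique symmetric positive definite matrix with L²AL² = B. Let M(q,p) = (Bp, Aq) be the linear vector field of the system q̇ = Bp, ṗ = Aq. Then the subspaces E⁻ = {(q, −L⁻²q) : q ∈ ℝⁿ} and E⁺ = {(q, L⁻²q) : q ∈ ℝⁿ} are invariant under M (M maps each subspace into itself), and E⁻ is the stable space and E⁺ the unstable space of the flow: for every v ∈ E⁻ one has exp(tM)v → 0 as t → +∞, and for every v ∈ E⁺ one has exp(tM)v → 0 as t → −∞. -/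
/-!
On the graph `{(q, D q)}` of a matrix `D` with `D B D = A`, the field `M(q, p) = (Bp, Aq)` acts
as `q ↦ B D q`: `M [1; D] = [1; D] (B D)`, hence `exp(tM) [1; D] = [1; D] exp(t B D)`.
Both `D = L⁻²` and `D = -L⁻²` satisfy `D B D = A`, with `B D = ± L²A`. Finally
`L²A = L (L A L) L⁻¹` is similar to the positive definite matrix `L A L`, so the spectral
theorem gives `exp(s L²A) → 0` as `s → -∞`.
-/

open Matrix Filter Topology

namespace Matrix

variable {m n : Type*} [Fintype m] [Fintype n]

theorem mulVec_mulVec_of_mul_eq_mul {R : Type*} [CommSemiring R] {X : Matrix m m R}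
    {K : Matrix m n R} {Y : Matrix n n R} (h : X * K = K * Y) (q : n → R) :
    X *ᵥ (K *ᵥ q) = K *ᵥ (Y *ᵥ q) := by
  rw [mulVec_mulVec, h, ← mulVec_mulVec]

theorem mapsTo_range_mulVec_of_mul_eq_mul {R : Type*} [CommSemiring R] {X : Matrix m m R}
    {K : Matrix m n R} {Y : Matrix n n R} (h : X * K = K * Y) :
    Set.MapsTo (X *ᵥ ·) (Set.range (K *ᵥ ·)) (Set.range (K *ᵥ ·)) := by
  rintro _ ⟨q, rfl⟩
  exact ⟨Y *ᵥ q, (mulVec_mulVec_of_mul_eq_mul h q).symm⟩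

theorem fromBlocks_zero_mul_fromRows_one [DecidableEq m] {R : Type*} [Semiring R]
    {A : Matrix n m R} {B : Matrix m n R} {D : Matrix n m R} (h : D * B * D = A) :
    fromBlocks 0 B A 0 * fromRows (1 : Matrix m m R) D = fromRows 1 D * (B * D) := by
  rw [fromBlocks_mul_fromRows, fromRows_mul, ← h]
  simp [Matrix.mul_assoc]

variable [DecidableEq m] [DecidableEq n]

theorem pow_mul_eq_mul_pow_of_mul_eq_mul {R : Type*} [Semiring R] {X : Matrix m m R}
    {K : Matrix m n R} {Y : Matrix n n R} (h : X * K = K * Y) (k : ℕ) :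
    X ^ k * K = K * Y ^ k := by
  induction k with
  | zero => simp
  | succ k ih =>
    rw [pow_succ', pow_succ', Matrix.mul_assoc, ih, ← Matrix.mul_assoc, h, Matrix.mul_assoc]

theorem exp_mul_eq_mul_exp_of_mul_eq_mul {𝕂 : Type*} [RCLike 𝕂] {X : Matrix m m 𝕂}
    {K : Matrix m n 𝕂} {Y : Matrix n n 𝕂} (h : X * K = K * Y) :
    NormedSpace.exp X * K = K * NormedSpace.exp Y := by
  open scoped Norms.Operator in
  have hX := (NormedSpace.expSeries_summable' (𝕂 := 𝕂) X).hasSum.map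
    (mulRightLinearMap m 𝕂 K) (continuous_id.matrix_mul continuous_const)
  open scoped Norms.Operator in
  have hY := (NormedSpace.expSeries_summable' (𝕂 := 𝕂) Y).hasSum.map
    (mulLeftLinearMap n 𝕂 K) (continuous_const.matrix_mul continuous_id)
  rw [NormedSpace.exp_eq_tsum 𝕂, NormedSpace.exp_eq_tsum 𝕂]
  refine hX.unique ?_
  convert hY using 1
  · funext k
    simp [pow_mul_eq_mul_pow_of_mul_eq_mul h]
  · rfl

theorem tendsto_exp_smul_atBot_of_posDef {P : Matrix n n ℝ} (hP : P.PosDef) :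
    Tendsto (fun s : ℝ => NormedSpace.exp (s • P)) atBot (𝓝 0) := by
  set U : Matrix n n ℝ := (hP.isHermitian.eigenvectorUnitary : Matrix n n ℝ)
  set d := hP.isHermitian.eigenvalues
  have hU : U⁻¹ = star U :=
    inv_eq_left_inv (Unitary.star_mul_self_of_mem hP.isHermitian.eigenvectorUnitary.2)
  have hexp : ∀ s : ℝ,
      NormedSpace.exp (s • P) = U * diagonal (fun i => Real.exp (s * d i)) * U⁻¹ := by
    intro s
    conv_lhs => rw [hP.isHermitian.spectral_theorem]
    rw [Unitary.conjStarAlgAut_apply, ← hU, ← smul_mul_assoc, ← mul_smul_comm,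
      exp_conj _ _ Unitary.isUnit_coe, ← diagonal_smul, exp_diagonal]
    congr
    funext i
    simp [d, Real.exp_eq_exp_ℝ]
  have hcont : Continuous fun v : n → ℝ => U * diagonal v * U⁻¹ := by fun_prop
  have hdiag : Tendsto (fun s : ℝ => fun i => Real.exp (s * d i)) atBot (𝓝 0) :=
    tendsto_pi_nhds.2 fun i =>
      Real.tendsto_exp_atBot.comp (tendsto_id.atBot_mul_const (hP.eigenvalues_pos i))
  rw [tendsto_congr hexp]
  simpa [Function.comp_def] using (hcont.tendsto 0).comp hdiag

theorem tendsto_exp_smul_mul_mul_atBot_of_posDef {A L : Matrix n n ℝ} (hA : A.PosDef)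
    (hL : L.PosDef) :
    Tendsto (fun s : ℝ => NormedSpace.exp (s • (L * L * A))) atBot (𝓝 0) := by
  have hLAL : (L * A * L).PosDef := by
    simpa only [hL.isHermitian.eq] using
      hA.conjTranspose_mul_mul_same (mulVec_injective_of_isUnit hL.isUnit)
  have hconj : ∀ s : ℝ, s • (L * L * A) = L * (s • (L * A * L)) * L⁻¹ := fun s => by
    rw [mul_smul_comm, smul_mul_assoc]
    simp only [Matrix.mul_assoc, mul_nonsing_inv _ ((isUnit_iff_isUnit_det L).mp hL.isUnit),
      Matrix.mul_one]
  simp_rw [hconj, exp_conj _ _ hL.isUnit]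
  have hcont : Continuous fun Z : Matrix n n ℝ => L * Z * L⁻¹ := by fun_prop
  simpa [Function.comp_def] using (hcont.tendsto 0).comp (tendsto_exp_smul_atBot_of_posDef hLAL)

theorem tendsto_exp_smul_mulVec_of_mem_range {X : Matrix m m ℝ} {K : Matrix m n ℝ}
    {Y : Matrix n n ℝ} {l : Filter ℝ} (h : X * K = K * Y)
    (hY : Tendsto (fun t : ℝ => NormedSpace.exp (t • Y)) l (𝓝 0)) :
    ∀ v ∈ Set.range (K *ᵥ ·),
      Tendsto (fun t : ℝ => NormedSpace.exp (t • X) *ᵥ v) l (𝓝 0) := by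
  rintro _ ⟨q, rfl⟩
  have hexp : ∀ t : ℝ, NormedSpace.exp (t • X) *ᵥ (K *ᵥ q)
      = K *ᵥ (NormedSpace.exp (t • Y) *ᵥ q) := fun t =>
    mulVec_mulVec_of_mul_eq_mul (exp_mul_eq_mul_exp_of_mul_eq_mul (by
      rw [Matrix.smul_mul, h, Matrix.mul_smul])) q
  have hcont : Continuous fun Z : Matrix n n ℝ => K *ᵥ (Z *ᵥ q) := by fun_prop
  rw [tendsto_congr hexp]
  simpa [Function.comp_def] using (hcont.tendsto 0).comp hY

end Matrix

theorem stable_unstable_spaces_linear_system_general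
    (n : ℕ) (A B L : Matrix (Fin n) (Fin n) ℝ)
    (hA : A.PosDef) (hL : L.PosDef)
    (hLAL : L * L * A * (L * L) = B) :
    let M : Matrix (Fin n ⊕ Fin n) (Fin n ⊕ Fin n) ℝ := Matrix.fromBlocks 0 B A 0
    let Eminus : Set (Fin n ⊕ Fin n → ℝ) :=
      {v | ∃ q : Fin n → ℝ, v = Sum.elim q (-((L * L)⁻¹.mulVec q))}
    let Eplus : Set (Fin n ⊕ Fin n → ℝ) :=
      {v | ∃ q : Fin n → ℝ, v = Sum.elim q ((L * L)⁻¹.mulVec q)}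
    (∀ v ∈ Eminus, M.mulVec v ∈ Eminus) ∧
    (∀ v ∈ Eplus, M.mulVec v ∈ Eplus) ∧
    (∀ v ∈ Eminus,
      Tendsto (fun t : ℝ => (NormedSpace.exp (t • M)).mulVec v) atTop (nhds 0)) ∧
    (∀ v ∈ Eplus,
      Tendsto (fun t : ℝ => (NormedSpace.exp (t • M)).mulVec v) atBot (nhds 0)) := by
  intro M Eminus Eplus
  set C := (L * L)⁻¹
  have hLL : IsUnit (L * L).det := (isUnit_iff_isUnit_det _).mp (hL.isUnit.mul hL.isUnit)
  have hBC : B * C = L * L * A := by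
    rw [← hLAL, Matrix.mul_assoc _ (L * L), mul_nonsing_inv _ hLL, Matrix.mul_one]
  have hCBC : C * B * C = A := by
    rw [Matrix.mul_assoc, hBC, ← Matrix.mul_assoc, nonsing_inv_mul _ hLL, Matrix.one_mul]
  have hMminus : M * fromRows (1 : Matrix (Fin n) (Fin n) ℝ) (-C)
      = fromRows 1 (-C) * -(L * L * A) := by
    rw [fromBlocks_zero_mul_fromRows_one (by simpa using hCBC), Matrix.mul_neg, hBC]
  have hMplus : M * fromRows (1 : Matrix (Fin n) (Fin n) ℝ) C = fromRows 1 C * (L * L * A) :=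
    hBC ▸ fromBlocks_zero_mul_fromRows_one hCBC
  have hEminus : Eminus = Set.range (fromRows 1 (-C) *ᵥ ·) := by
    ext v; simp [Eminus, C, fromRows_mulVec, neg_mulVec, eq_comm]
  have hEplus : Eplus = Set.range (fromRows 1 C *ᵥ ·) := by
    ext v; simp [Eplus, C, fromRows_mulVec, eq_comm]
  have hdecay := tendsto_exp_smul_mul_mul_atBot_of_posDef hA hL
  rw [hEminus, hEplus]
  refine ⟨mapsTo_range_mulVec_of_mul_eq_mul hMminus, mapsTo_range_mulVec_of_mul_eq_mul hMplus,
    tendsto_exp_smul_mulVec_of_mem_range hMminus ?_,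
    tendsto_exp_smul_mulVec_of_mem_range hMplus hdecay⟩
  simpa only [Function.comp_def, smul_neg, neg_smul] using hdecay.comp tendsto_neg_atTop_atBot

/-- for the linear system `q̇ = Bp, ṗ = Aq` (matrix
`M = fromBlocks 0 B A 0` on ℝⁿ×ℝⁿ ≅ (Fin n ⊕ Fin n) → ℝ), the subspaces
`E⁻ = {(q, −L⁻²q)}` and `E⁺ = {(q, L⁻²q)}` are invariant, `E⁻` being the stable space
(`exp(tM)v → 0` as `t → +∞`) and `E⁺` the unstable space (`exp(tM)v → 0` as `t → −∞`),
where `L` is the unique symmetric positive definite matrix with `L²AL² = B`. -/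
theorem stable_unstable_spaces_linear_system
    (n : ℕ) (A B L : Matrix (Fin n) (Fin n) ℝ)
    (hA : A.PosDef) (hB : B.PosDef) (hL : L.PosDef)
    (hLAL : L * L * A * (L * L) = B) :
    let M : Matrix (Fin n ⊕ Fin n) (Fin n ⊕ Fin n) ℝ := Matrix.fromBlocks 0 B A 0
    let Eminus : Set (Fin n ⊕ Fin n → ℝ) :=
      {v | ∃ q : Fin n → ℝ, v = Sum.elim q (-((L * L)⁻¹.mulVec q))}
    let Eplus : Set (Fin n ⊕ Fin n → ℝ) :=
      {v | ∃ q : Fin n → ℝ, v = Sum.elim q ((L * L)⁻¹.mulVec q)}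
    (∀ v ∈ Eminus, M.mulVec v ∈ Eminus) ∧
    (∀ v ∈ Eplus, M.mulVec v ∈ Eplus) ∧
    (∀ v ∈ Eminus,
      Tendsto (fun t : ℝ => (NormedSpace.exp (t • M)).mulVec v) atTop (nhds 0)) ∧
    (∀ v ∈ Eplus,
      Tendsto (fun t : ℝ => (NormedSpace.exp (t • M)).mulVec v) atBot (nhds 0)) :=
  stable_unstable_spaces_linear_system_general n A B L hA hL hLAL
end

section
/- Let Ω ⊆ ℝᵈ be open, g : Ω → ℝᵉ a C¹ map, and X = (X₁,X₂) : ℝᵈ×ℝᵉ → ℝᵈ×ℝᵉ a locally Lipschitz vector field that is tangent to the graph Γ = {(u, g(u)) : u ∈ Ω} at each of its points, i.e. X₂(u,g(u)) = Dg(u)·X₁(u,g(u)) for all u ∈ Ω. If γ : [0,T] → ℝᵈ×ℝᵉ is an integral curve of X with γ(0) ∈ Γ and with first component γ₁(t) ∈ Ω for all t ∈ [0,T], then γ(t) ∈ Γ for all t ∈ [0,T]. (A weakly invariant C¹ graph contains every orbit starting on it for as long as the orbit's base point stays in the domain of the graph.) -/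
/-!
The deviation `h t = (γ t).2 - g (γ t).1` of the orbit from the graph vanishes at `t = 0`.
Its derivative is `X₂(γ) - Dg(γ₁) X₁(γ)`; subtracting the tangency identity at the graph point
`σ t = ((γ t).1, g (γ t).1)` above the same base point shows that it is bounded by
`(1 + ‖Dg‖) L ‖γ t - σ t‖ = (1 + ‖Dg‖) L ‖h t‖`, where `L` is a Lipschitz constant of `X` on the
compact set swept out by `γ` and `σ`. Grönwall's inequality then forces `h ≡ 0`.
-/

open Set

section

variable {E F : Type*} [NormedAddCommGroup E] [NormedSpace ℝ E]
  [NormedAddCommGroup F] [NormedSpace ℝ F]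

theorem norm_snd_sub_apply_fst_le_of_lipschitzOnWith {X : E × F → E × F} {s : Set (E × F)}
    {L : NNReal} (hX : LipschitzOnWith L X s) {A : E →L[ℝ] F} {M : ℝ} (hA : ‖A‖ ≤ M)
    {u : E} {v w : F} (hv : (u, v) ∈ s) (hw : (u, w) ∈ s)
    (htangent : (X (u, w)).2 = A (X (u, w)).1) :
    ‖(X (u, v)).2 - A (X (u, v)).1‖ ≤ (1 + M) * L * ‖v - w‖ := by
  set δ := X (u, v) - X (u, w)
  have hδ : ‖δ‖ ≤ L * ‖v - w‖ := by
    simpa [δ, dist_eq_norm, Prod.norm_def] using hX.dist_le_mul _ hv _ hw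
  have hM : 0 ≤ M := (norm_nonneg A).trans hA
  have hsplit : (X (u, v)).2 - A (X (u, v)).1 = δ.2 - A δ.1 := by
    simp only [δ, Prod.fst_sub, Prod.snd_sub, map_sub, htangent]
    abel
  calc ‖(X (u, v)).2 - A (X (u, v)).1‖ = ‖δ.2 - A δ.1‖ := by rw [hsplit]
    _ ≤ ‖δ.2‖ + ‖A‖ * ‖δ.1‖ := (norm_sub_le _ _).trans (add_le_add_right (A.le_opNorm _) _)
    _ ≤ ‖δ‖ + M * ‖δ‖ :=
      add_le_add (norm_snd_le δ) (mul_le_mul hA (norm_fst_le δ) (norm_nonneg _) hM)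
    _ = (1 + M) * ‖δ‖ := by ring
    _ ≤ (1 + M) * L * ‖v - w‖ := by
      rw [mul_assoc]
      exact mul_le_mul_of_nonneg_left hδ (by linarith)

theorem HasDerivAt.snd_sub_comp_fst {γ : ℝ → E × F} {γ' : E × F} {t : ℝ}
    (hγ : HasDerivAt γ γ' t) {g : E → F} (hg : DifferentiableAt ℝ g (γ t).1) :
    HasDerivAt (fun s => (γ s).2 - g (γ s).1) (γ'.2 - fderiv ℝ g (γ t).1 γ'.1) t :=
  (hasFDerivAt_snd.comp_hasDerivAt t hγ).sub
    (hg.hasFDerivAt.comp_hasDerivAt t (hasFDerivAt_fst.comp_hasDerivAt t hγ))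

end

theorem weakly_invariant_graph_contains_orbits_general
    (d e : ℕ) (Ω : Set (Fin d → ℝ)) (hΩ : IsOpen Ω)
    (g : (Fin d → ℝ) → (Fin e → ℝ)) (hg : ContDiffOn ℝ 1 g Ω)
    (X : (Fin d → ℝ) × (Fin e → ℝ) → (Fin d → ℝ) × (Fin e → ℝ))
    (hX : LocallyLipschitz X)
    (htangent : ∀ u ∈ Ω, (X (u, g u)).2 = fderiv ℝ g u ((X (u, g u)).1))
    (T : ℝ)
    (γ : ℝ → (Fin d → ℝ) × (Fin e → ℝ))
    (hγ : ∀ t ∈ Set.Icc 0 T, HasDerivAt γ (X (γ t)) t)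
    (hγ0 : (γ 0).1 ∈ Ω ∧ (γ 0).2 = g (γ 0).1)
    (hbase : ∀ t ∈ Set.Icc 0 T, (γ t).1 ∈ Ω) :
    ∀ t ∈ Set.Icc 0 T, (γ t).2 = g ((γ t).1) := by
  have hγc : ContinuousOn γ (Icc 0 T) := fun t ht => (hγ t ht).continuousAt.continuousWithinAt
  have hσc : ContinuousOn (fun t => ((γ t).1, g (γ t).1)) (Icc 0 T) :=
    hγc.fst.prodMk (hg.continuousOn.comp hγc.fst hbase)
  obtain ⟨L, hL⟩ := hX.locallyLipschitzOn.exists_lipschitzOnWith_of_compact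
    ((isCompact_Icc.image_of_continuousOn hγc).union (isCompact_Icc.image_of_continuousOn hσc))
  obtain ⟨M, hM⟩ := isCompact_Icc.exists_bound_of_continuousOn
    ((hg.continuousOn_fderiv_of_isOpen hΩ le_rfl).comp hγc.fst hbase)
  have hdev : ∀ t ∈ Icc 0 T, HasDerivAt (fun s => (γ s).2 - g (γ s).1)
      ((X (γ t)).2 - fderiv ℝ g (γ t).1 (X (γ t)).1) t := fun t ht =>
    (hγ t ht).snd_sub_comp_fst
      ((hg.differentiableOn one_ne_zero).differentiableAt (hΩ.mem_nhds (hbase t ht)))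
  intro t ht
  refine sub_eq_zero.1 (eq_zero_of_abs_deriv_le_mul_abs_self_of_eq_zero_right (K := (1 + M) * L)
    (fun s hs => (hdev s hs).continuousAt.continuousWithinAt)
    (fun s hs => (hdev s (Ico_subset_Icc_self hs)).hasDerivWithinAt)
    (sub_eq_zero.2 hγ0.2) (fun s hs => ?_) t ht)
  have hsT := Ico_subset_Icc_self hs
  simpa only [Prod.mk.eta, Function.comp_apply] using
    norm_snd_sub_apply_fst_le_of_lipschitzOnWith hL (hM s hsT)
      (by rw [Prod.mk.eta]; exact Or.inl (mem_image_of_mem γ hsT))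
      (Or.inr (mem_image_of_mem _ hsT)) (htangent _ (hbase s hsT))

/-- a weakly invariant C¹ graph contains every orbit starting on it, for as
long as the orbit's base point stays in the domain of the graph. -/
theorem weakly_invariant_graph_contains_orbits
    (d e : ℕ) (Ω : Set (Fin d → ℝ)) (hΩ : IsOpen Ω)
    (g : (Fin d → ℝ) → (Fin e → ℝ)) (hg : ContDiffOn ℝ 1 g Ω)
    (X : (Fin d → ℝ) × (Fin e → ℝ) → (Fin d → ℝ) × (Fin e → ℝ))
    (hX : LocallyLipschitz X)
    (htangent : ∀ u ∈ Ω, (X (u, g u)).2 = fderiv ℝ g u ((X (u, g u)).1))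
    (T : ℝ) (hT : 0 ≤ T)
    (γ : ℝ → (Fin d → ℝ) × (Fin e → ℝ))
    (hγ : ∀ t ∈ Set.Icc 0 T, HasDerivAt γ (X (γ t)) t)
    (hγ0 : (γ 0).1 ∈ Ω ∧ (γ 0).2 = g (γ 0).1)
    (hbase : ∀ t ∈ Set.Icc 0 T, (γ t).1 ∈ Ω) :
    ∀ t ∈ Set.Icc 0 T, (γ t).2 = g ((γ t).1) :=
  weakly_invariant_graph_contains_orbits_general d e Ω hΩ g hg X hX htangent T γ hγ hγ0 hbase
end
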